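/- arXiv:2507.18145 — 9 statements merged into one kernel-verified Lean document; each statement's English description precedes it below -/
import Mathlib

section
/- Let AGG ∈ {SUM, MEAN, MAX}. If a vertex property is defined by a simple AGG-GNN with truncated ReLU activation ReLU*(x) = min(max(0,x),1), then it is also defined by a simple AGG-GNN with ReLU activation ReLU(x) = max(0,x). -/
open scoped Classical

/-- A `α`-labeled finite directed graph. -/
structure LabeledGraph (α : Type) : Type 1 where
  V : Type
  [fintypeV : Fintype V]
  adj : V → V → Prop
  label : V → α → Prop

attribute [instance] LabeledGraph.fintypeV

namespace LabeledGraph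

variable {α : Type}

/-- The neighborhood (set of successors) of a vertex. -/
def nbhd (G : LabeledGraph α) (v : G.V) : Set G.V := {u | G.adj v u}

/-- The neighborhood of a vertex, as a finset. -/
noncomputable def nbhdFinset (G : LabeledGraph α) (v : G.V) : Finset G.V :=
  Finset.univ.filter (fun u => G.adj v u)

/-- The `c`-scaling of a graph: each vertex is multiplied `c` times. -/
def scale (G : LabeledGraph α) (c : ℕ) : LabeledGraph α where
  V := G.V × Fin c
  adj := fun p q => G.adj p.1 q.1
  label := fun p => G.label p.1

end LabeledGraph

/-- Formulas of modal logic ML. -/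
inductive ML (α : Type) : Type where
  | atom : α → ML α
  | neg  : ML α → ML α
  | or   : ML α → ML α → ML α
  | dia  : ML α → ML α

/-- Satisfaction for ML. -/
def ML.sat {α : Type} (G : LabeledGraph α) : ML α → G.V → Prop
  | .atom p, v => G.label v p
  | .neg φ, v => ¬ ML.sat G φ v
  | .or φ ψ, v => ML.sat G φ v ∨ ML.sat G ψ v
  | .dia φ, v => ∃ u, G.adj v u ∧ ML.sat G φ u

/-- Formulas of graded modal logic GML. -/
inductive GML (α : Type) : Type where
  | atom : α → GML α
  | neg  : GML α → GML α
  | or   : GML α → GML α → GML α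
  | dia  : ℕ → GML α → GML α

/-- Satisfaction for GML: `dia n φ` is `◊^{≥n} φ`. -/
def GML.sat {α : Type} (G : LabeledGraph α) : GML α → G.V → Prop
  | .atom p, v => G.label v p
  | .neg φ, v => ¬ GML.sat G φ v
  | .or φ ψ, v => GML.sat G φ v ∨ GML.sat G ψ v
  | .dia n φ, v => n ≤ {u | G.adj v u ∧ GML.sat G φ u}.ncard

/-- Formulas of ratio modal logic RML; diamonds carry a ratio `r ∈ [0,1]`. -/
inductive RML (α : Type) : Type where
  | atom  : α → RML α
  | neg   : RML α → RML α
  | or    : RML α → RML α → RML α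
  | diaGe : Set.Icc (0:ℝ) 1 → RML α → RML α
  | diaGt : Set.Icc (0:ℝ) 1 → RML α → RML α

/-- Satisfaction for RML. If a vertex has no successors then `◊^{≥r}φ`
holds and `◊^{>r}φ` fails; otherwise the fraction of successors satisfying
`φ` is compared with `r`. -/
noncomputable def RML.sat {α : Type} (G : LabeledGraph α) : RML α → G.V → Prop
  | .atom p, v => G.label v p
  | .neg φ, v => ¬ RML.sat G φ v
  | .or φ ψ, v => RML.sat G φ v ∨ RML.sat G ψ v
  | .diaGe r φ, v => (G.nbhd v).Nonempty →
      (r : ℝ) ≤ ({u | G.adj v u ∧ RML.sat G φ u}.ncard : ℝ) / ((G.nbhd v).ncard : ℝ)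
  | .diaGt r φ, v => (G.nbhd v).Nonempty ∧
      (r : ℝ) < ({u | G.adj v u ∧ RML.sat G φ u}.ncard : ℝ) / ((G.nbhd v).ncard : ℝ)

/-- Formulas of AFML[1] (diamond fragment of alternation-free modal logic). -/
inductive AFML1 (α : Type) : Type where
  | atom   : α → AFML1 α
  | natom  : α → AFML1 α
  | boxBot : AFML1 α
  | and    : AFML1 α → AFML1 α → AFML1 α
  | or     : AFML1 α → AFML1 α → AFML1 α
  | dia    : AFML1 α → AFML1 α

/-- Satisfaction for AFML[1]. -/
def AFML1.sat {α : Type} (G : LabeledGraph α) : AFML1 α → G.V → Prop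
  | .atom p, v => G.label v p
  | .natom p, v => ¬ G.label v p
  | .boxBot, v => ∀ u, ¬ G.adj v u
  | .and φ ψ, v => AFML1.sat G φ v ∧ AFML1.sat G ψ v
  | .or φ ψ, v => AFML1.sat G φ v ∨ AFML1.sat G ψ v
  | .dia φ, v => ∃ u, G.adj v u ∧ AFML1.sat G φ u

/-- Modal depth of an AFML[1] formula. -/
def AFML1.depth {α : Type} : AFML1 α → ℕ
  | .atom _ => 0
  | .natom _ => 0
  | .boxBot => 1
  | .and φ ψ => max (AFML1.depth φ) (AFML1.depth ψ)
  | .or φ ψ => max (AFML1.depth φ) (AFML1.depth ψ)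
  | .dia φ => AFML1.depth φ + 1

/-- Formulas of AFML[2] (box fragment of alternation-free modal logic). -/
inductive AFML2 (α : Type) : Type where
  | atom   : α → AFML2 α
  | natom  : α → AFML2 α
  | diaTop : AFML2 α
  | and    : AFML2 α → AFML2 α → AFML2 α
  | or     : AFML2 α → AFML2 α → AFML2 α
  | box    : AFML2 α → AFML2 α

/-- Satisfaction for AFML[2]. -/
def AFML2.sat {α : Type} (G : LabeledGraph α) : AFML2 α → G.V → Prop
  | .atom p, v => G.label v p
  | .natom p, v => ¬ G.label v p
  | .diaTop, v => ∃ u, G.adj v u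
  | .and φ ψ, v => AFML2.sat G φ v ∧ AFML2.sat G ψ v
  | .or φ ψ, v => AFML2.sat G φ v ∨ AFML2.sat G ψ v
  | .box φ, v => ∀ u, G.adj v u → AFML2.sat G φ u

/-- Alternation-free modal logic: AFML[1] formulas together with AFML[2] formulas. -/
def AFML (α : Type) : Type := AFML1 α ⊕ AFML2 α

/-- Satisfaction for AFML. -/
def AFML.sat {α : Type} (G : LabeledGraph α) : AFML α → G.V → Prop
  | .inl φ => AFML1.sat G φ
  | .inr φ => AFML2.sat G φ

/-- The three aggregation functions. -/
inductive Agg : Type where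
  | sum : Agg
  | mean : Agg
  | max : Agg

/-- Apply an aggregation function componentwise to the (multiset of) values of `x`
over the finset `s`; empty aggregation yields `0` (so mean of the empty multiset is `0`). -/
noncomputable def Agg.apply {V : Type} : Agg → Finset V → (V → ℝ) → ℝ
  | .sum, s, x => ∑ u ∈ s, x u
  | .mean, s, x => (∑ u ∈ s, x u) / (s.card : ℝ)
  | .max, s, x => if h : s.Nonempty then s.sup' h x else 0

/-- A GNN: `L` layers, dimensions `δ 0, …, δ L` with `δ 0 = |α|`,
combination functions `com ℓ : ℝ^{δ ℓ} × ℝ^{δ ℓ} → ℝ^{δ (ℓ+1)}` for `ℓ < L`,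
and a threshold classification function `CLS(x) = 1 iff x_clsIdx ∼ clsThr`
where `∼` is `>` if `clsStrict` and `≥` otherwise. -/
structure GNN (α : Type) [Fintype α] : Type where
  L : ℕ
  δ : ℕ → ℕ
  hδ0 : δ 0 = Fintype.card α
  com : (ℓ : ℕ) → (Fin (δ ℓ) → ℝ) → (Fin (δ ℓ) → ℝ) → (Fin (δ (ℓ+1)) → ℝ)
  clsIdx : Fin (δ L)
  clsStrict : Bool
  clsThr : ℝ

/-- The feature vector computed by a GNN (with aggregation `agg`) at layer `ℓ`
at vertex `v` of graph `G`. Layer 0 yields the 0/1 indicator vector of the labels. -/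
noncomputable def GNN.feat {α : Type} [Fintype α] (𝒢 : GNN α) (agg : Agg)
    (G : LabeledGraph α) : (ℓ : ℕ) → G.V → Fin (𝒢.δ ℓ) → ℝ
  | 0, v, i => if G.label v ((Fintype.equivFin α).symm (Fin.cast 𝒢.hδ0 i)) then 1 else 0
  | (ℓ+1), v, i =>
      𝒢.com ℓ (𝒢.feat agg G ℓ v)
        (fun j => agg.apply (G.nbhdFinset v) (fun u => 𝒢.feat agg G ℓ u j)) i

/-- The GNN accepts a pointed graph iff the classification function outputs 1 on
the final feature vector. -/
noncomputable def GNN.accepts {α : Type} [Fintype α] (𝒢 : GNN α) (agg : Agg)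
    (G : LabeledGraph α) (v : G.V) : Prop :=
  if 𝒢.clsStrict then 𝒢.clsThr < 𝒢.feat agg G 𝒢.L v 𝒢.clsIdx
  else 𝒢.clsThr ≤ 𝒢.feat agg G 𝒢.L v 𝒢.clsIdx

/-- A GNN is simple with activation function `f` if each combination function
has the form `COM(x_v, x_a) = f(x_v·C + x_a·A + b)` (componentwise `f`). -/
def GNN.IsSimple {α : Type} [Fintype α] (𝒢 : GNN α) (f : ℝ → ℝ) : Prop :=
  ∀ ℓ < 𝒢.L, ∃ (C A : Fin (𝒢.δ ℓ) → Fin (𝒢.δ (ℓ+1)) → ℝ) (b : Fin (𝒢.δ (ℓ+1)) → ℝ),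
    ∀ (xv xa : Fin (𝒢.δ ℓ) → ℝ) (i : Fin (𝒢.δ (ℓ+1))),
      𝒢.com ℓ xv xa i = f ((∑ j, xv j * C j i) + (∑ j, xa j * A j i) + b i)

/-- All combination functions of the GNN are continuous. -/
def GNN.HasContinuousCom {α : Type} [Fintype α] (𝒢 : GNN α) : Prop :=
  ∀ ℓ < 𝒢.L,
    Continuous (fun p : (Fin (𝒢.δ ℓ) → ℝ) × (Fin (𝒢.δ ℓ) → ℝ) => 𝒢.com ℓ p.1 p.2)

/-- Truncated ReLU. -/
noncomputable def reluStar : ℝ → ℝ := fun x => min (max 0 x) 1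

/-- ReLU. -/
noncomputable def relu : ℝ → ℝ := fun x => max 0 x

/-- Two pointed graphs have the same vertex labels at their distinguished vertices. -/
def labelsEq {α : Type} (G1 G2 : LabeledGraph α) (v1 : G1.V) (v2 : G2.V) : Prop :=
  ∀ p, G1.label v1 p ↔ G2.label v2 p

/-- Spoiler wins the `ℓ`-round ML game on `((G1,v1),(G2,v2))`. -/
def spoilerWinsML {α : Type} (G1 G2 : LabeledGraph α) : ℕ → G1.V → G2.V → Prop
  | 0, v1, v2 => ¬ labelsEq G1 G2 v1 v2
  | (ℓ+1), v1, v2 =>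
      ¬ labelsEq G1 G2 v1 v2
      ∨ (∃ u1, G1.adj v1 u1 ∧ ∀ u2, G2.adj v2 u2 → spoilerWinsML G1 G2 ℓ u1 u2)
      ∨ (∃ u2, G2.adj v2 u2 ∧ ∀ u1, G1.adj v1 u1 → spoilerWinsML G1 G2 ℓ u1 u2)

/-- Spoiler wins the `ℓ`-round AFML[1] game on `((G1,v1),(G2,v2))`. -/
def spoilerWinsAFML1 {α : Type} (G1 G2 : LabeledGraph α) : ℕ → G1.V → G2.V → Prop
  | 0, v1, v2 => ¬ labelsEq G1 G2 v1 v2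
  | (ℓ+1), v1, v2 =>
      ¬ labelsEq G1 G2 v1 v2
      ∨ ((∀ u, ¬ G1.adj v1 u) ∧ (∃ u, G2.adj v2 u))
      ∨ (∃ u1, G1.adj v1 u1 ∧ ∀ u2, G2.adj v2 u2 → spoilerWinsAFML1 G1 G2 ℓ u1 u2)

/-- Spoiler wins the `ℓ`-round GML game with counting bound `c` on `((G1,v1),(G2,v2))`. -/
def spoilerWinsGML {α : Type} (c : ℕ) (G1 G2 : LabeledGraph α) : ℕ → G1.V → G2.V → Prop
  | 0, v1, v2 => ¬ labelsEq G1 G2 v1 v2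
  | (ℓ+1), v1, v2 =>
      ¬ labelsEq G1 G2 v1 v2
      ∨ (∃ U1 : Finset G1.V, (∀ u ∈ U1, G1.adj v1 u) ∧ 0 < U1.card ∧ U1.card ≤ c ∧
          ((G2.nbhd v2).ncard < U1.card ∨
            ∀ U2 : Finset G2.V, (∀ u ∈ U2, G2.adj v2 u) → U2.card = U1.card →
              ∃ u2 ∈ U2, ∀ u1 ∈ U1, spoilerWinsGML c G1 G2 ℓ u1 u2))
      ∨ (∃ U2 : Finset G2.V, (∀ u ∈ U2, G2.adj v2 u) ∧ 0 < U2.card ∧ U2.card ≤ c ∧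
          ((G1.nbhd v1).ncard < U2.card ∨
            ∀ U1 : Finset G1.V, (∀ u ∈ U1, G1.adj v1 u) → U1.card = U2.card →
              ∃ u1 ∈ U1, ∀ u2 ∈ U2, spoilerWinsGML c G1 G2 ℓ u1 u2))

/-- The ratio `1/2` as an element of `[0,1]`. -/
noncomputable def half : Set.Icc (0:ℝ) 1 := ⟨1/2, by norm_num⟩

/-!
The truncated ReLU is a difference of two ReLUs: `reluStar x = relu x - relu (x - 1)`.
So a ReLU network can carry, for every preactivation `z` of the given network, both `relu z`
and `relu (z - 1)`: the original features are the linear image `relu z - relu (z - 1)` of these,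
and this decoding is absorbed into the weights of the next layer. Aggregation commutes with the
decoding: SUM and MEAN are linear, and `relu`, `x ↦ relu (x - 1)` and `reluStar` are monotone,
hence commute with MAX. Finally `reluStar z = min (relu z) 1`, so a threshold below `1`
(at most `1` for a non-strict one) gives the same verdict on `relu z`; any other threshold is
never reached by the original network, which then accepts nothing, just like a constant ReLU
network.
-/

lemma relu_sub_relu_sub_one (x : ℝ) : relu x - relu (x - 1) = reluStar x := by
  simp only [relu, reluStar]
  rcases le_total x 0 with hx | hx
  · rw [max_eq_left hx, max_eq_left (by linarith), min_eq_left zero_le_one, sub_zero]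
  rcases le_total x 1 with hx1 | hx1
  · rw [max_eq_right hx, max_eq_left (by linarith), min_eq_left hx1, sub_zero]
  · rw [max_eq_right hx, max_eq_right (by linarith), min_eq_right hx1]
    ring

lemma relu_monotone : Monotone relu := fun _ _ h => max_le_max le_rfl h

lemma Agg.apply_relu_sub_apply_relu_sub_one {V : Type} (agg : Agg) (s : Finset V) (z : V → ℝ) :
    agg.apply s (fun u => relu (z u)) - agg.apply s (fun u => relu (z u - 1))
      = agg.apply s (fun u => reluStar (z u)) := by
  cases agg with
  | sum =>
    simp only [Agg.apply, ← Finset.sum_sub_distrib, relu_sub_relu_sub_one]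
  | mean =>
    simp only [Agg.apply, ← sub_div, ← Finset.sum_sub_distrib, relu_sub_relu_sub_one]
  | max =>
    simp only [Agg.apply]
    split_ifs with hs
    · have hmono : ∀ {g : ℝ → ℝ}, Monotone g → s.sup' hs (fun u => g (z u)) = g (s.sup' hs z) :=
        fun hg => (Finset.apply_sup'_eq_sup'_comp hs _ fun x y => hg.map_sup x y).symm
      rw [hmono relu_monotone,
        hmono (g := fun x => relu (x - 1)) fun _ _ h => relu_monotone (sub_le_sub_right h 1),
        hmono (g := reluStar) fun _ _ h => min_le_min_right 1 (relu_monotone h)]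
      exact relu_sub_relu_sub_one _
    · exact sub_zero 0

section FinAppend

open Matrix

variable {R : Type*} {m n : ℕ}

def Matrix.dupCols (M : Matrix (Fin m) (Fin n) R) : Matrix (Fin m) (Fin (n + n)) R :=
  Matrix.of fun j => Fin.append (M j) (M j)

lemma Matrix.vecMul_dupCols [NonUnitalNonAssocSemiring R] (x : Fin m → R)
    (M : Matrix (Fin m) (Fin n) R) :
    x ᵥ* M.dupCols = Fin.append (x ᵥ* M) (x ᵥ* M) := by
  ext k
  refine Fin.addCases (fun i => ?_) (fun i => ?_) k <;>
    simp only [Matrix.dupCols, Matrix.vecMul, dotProduct, Matrix.of_apply, Fin.append_left,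
      Fin.append_right]

def Matrix.oneNegOne [Ring R] (n : ℕ) : Matrix (Fin (n + n)) (Fin n) R :=
  Matrix.of (Fin.append (fun i => Pi.single i 1) (fun i => -Pi.single i 1))

lemma Matrix.append_vecMul_oneNegOne [Ring R] (p q : Fin n → R) :
    Fin.append p q ᵥ* Matrix.oneNegOne n = p - q := by
  funext j
  simp only [Matrix.oneNegOne, Matrix.vecMul, dotProduct, Matrix.of_apply, Fin.sum_univ_add,
    Fin.append_left, Fin.append_right]
  simp [Pi.single_apply, sub_eq_add_neg]

lemma Fin.comp_append {α β : Type*} (g : α → β) (p : Fin m → α) (q : Fin n → α) :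
    g ∘ Fin.append p q = Fin.append (g ∘ p) (g ∘ q) := by
  ext k
  refine Fin.addCases (fun i => ?_) (fun i => ?_) k <;>
    simp only [Function.comp_apply, Fin.append_left, Fin.append_right]

lemma Agg.apply_append {V : Type} (agg : Agg) (s : Finset V) (p q : V → Fin n → ℝ) :
    (fun k => agg.apply s fun u => Fin.append (p u) (q u) k)
      = Fin.append (fun j => agg.apply s fun u => p u j) (fun j => agg.apply s fun u => q u j) := by
  ext k
  refine Fin.addCases (fun i => ?_) (fun i => ?_) k <;>
    simp only [Fin.append_left, Fin.append_right]

end FinAppend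

section Threshold

variable {β : Type*} [LinearOrder β] {s : Bool} {c d : β}

lemma threshold_min_iff (y : β) (hc : if s then c < d else c ≤ d) :
    (if s then c < min y d else c ≤ min y d) ↔ (if s then c < y else c ≤ y) := by
  cases s
  · exact le_min_iff.trans (and_iff_left hc)
  · exact lt_min_iff.trans (and_iff_left hc)

lemma not_threshold_min (y : β) (hc : ¬ if s then c < d else c ≤ d) :
    ¬ if s then c < min y d else c ≤ min y d := by
  cases s
  · exact fun h => hc (h.trans (min_le_right y d))
  · exact fun h => hc (h.trans_le (min_le_right y d))

end Threshold

noncomputable section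

namespace GNN

open Matrix

variable {α : Type} [Fintype α]

def aggFeat (𝒢 : GNN α) (agg : Agg) (G : LabeledGraph α) (ℓ : ℕ) (v : G.V) :
    Fin (𝒢.δ ℓ) → ℝ :=
  fun j => agg.apply (G.nbhdFinset v) fun u => 𝒢.feat agg G ℓ u j

lemma feat_succ (𝒢 : GNN α) (agg : Agg) (G : LabeledGraph α) (ℓ : ℕ) (v : G.V) :
    𝒢.feat agg G (ℓ + 1) v = 𝒢.com ℓ (𝒢.feat agg G ℓ v) (𝒢.aggFeat agg G ℓ v) :=
  rfl

def IsSimpleWith (𝒢 : GNN α) (f : ℝ → ℝ)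
    (C A : (ℓ : ℕ) → Matrix (Fin (𝒢.δ ℓ)) (Fin (𝒢.δ (ℓ + 1))) ℝ)
    (b : (ℓ : ℕ) → Fin (𝒢.δ (ℓ + 1)) → ℝ) : Prop :=
  ∀ ℓ < 𝒢.L, ∀ xv xa, 𝒢.com ℓ xv xa = f ∘ (xv ᵥ* C ℓ + xa ᵥ* A ℓ + b ℓ)

lemma IsSimple.exists_isSimpleWith {𝒢 : GNN α} {f : ℝ → ℝ} (h : 𝒢.IsSimple f) :
    ∃ C A b, 𝒢.IsSimpleWith f C A b := by
  choose C A b hcom using h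
  refine ⟨fun ℓ => if hℓ : ℓ < 𝒢.L then Matrix.of (C ℓ hℓ) else 0,
    fun ℓ => if hℓ : ℓ < 𝒢.L then Matrix.of (A ℓ hℓ) else 0,
    fun ℓ => if hℓ : ℓ < 𝒢.L then b ℓ hℓ else 0, fun ℓ hℓ xv xa => ?_⟩
  funext i
  simp only [hcom ℓ hℓ, Function.comp_apply, Pi.add_apply, dif_pos hℓ]
  rfl

section ToRelu

variable (𝒢 : GNN α) (C A : (ℓ : ℕ) → Matrix (Fin (𝒢.δ ℓ)) (Fin (𝒢.δ (ℓ + 1))) ℝ)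
  (b : (ℓ : ℕ) → Fin (𝒢.δ (ℓ + 1)) → ℝ)

abbrev reluDim : ℕ → ℕ
  | 0 => 𝒢.δ 0
  | ℓ + 1 => 𝒢.δ (ℓ + 1) + 𝒢.δ (ℓ + 1)

def reluDecode : (ℓ : ℕ) → Matrix (Fin (𝒢.reluDim ℓ)) (Fin (𝒢.δ ℓ)) ℝ
  | 0 => (1 : Matrix (Fin (𝒢.δ 0)) (Fin (𝒢.δ 0)) ℝ)
  | ℓ + 1 => Matrix.oneNegOne (𝒢.δ (ℓ + 1))

def reluLift : (ℓ : ℕ) → Fin (𝒢.δ ℓ) → Fin (𝒢.reluDim ℓ)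
  | 0, i => i
  | _ + 1, i => Fin.castAdd _ i

-- Reducible, like `reluDim`, so that `Fin ((𝒢.toRelu C A b).δ (ℓ + 1))` is seen to be
-- `Fin (𝒢.δ (ℓ + 1) + 𝒢.δ (ℓ + 1))` when rewriting.
abbrev toRelu : GNN α where
  L := 𝒢.L
  δ := 𝒢.reluDim
  hδ0 := 𝒢.hδ0
  com ℓ yv ya := relu ∘ (yv ᵥ* (𝒢.reluDecode ℓ * (C ℓ).dupCols)
    + ya ᵥ* (𝒢.reluDecode ℓ * (A ℓ).dupCols) + Fin.append (b ℓ) (b ℓ - 1))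
  clsIdx := 𝒢.reluLift 𝒢.L 𝒢.clsIdx
  clsStrict := 𝒢.clsStrict
  clsThr := 𝒢.clsThr

lemma toRelu_isSimple : (𝒢.toRelu C A b).IsSimple relu :=
  fun _ _ => ⟨_, _, _, fun _ _ _ => rfl⟩

variable (agg : Agg) (G : LabeledGraph α)

def preact (ℓ : ℕ) (v : G.V) : Fin (𝒢.δ (ℓ + 1)) → ℝ :=
  𝒢.feat agg G ℓ v ᵥ* C ℓ + 𝒢.aggFeat agg G ℓ v ᵥ* A ℓ + b ℓ

variable {𝒢 C A b agg G}

lemma feat_succ_eq_reluStar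
    (hcom : 𝒢.IsSimpleWith reluStar C A b)
    {ℓ : ℕ} (hℓ : ℓ < 𝒢.L) (v : G.V) :
    𝒢.feat agg G (ℓ + 1) v = reluStar ∘ 𝒢.preact C A b agg G ℓ v := by
  rw [feat_succ, hcom ℓ hℓ]
  rfl

lemma toRelu_feat_succ_of_decode {ℓ : ℕ} {v : G.V}
    (hfeat : (𝒢.toRelu C A b).feat agg G ℓ v ᵥ* 𝒢.reluDecode ℓ = 𝒢.feat agg G ℓ v)
    (hagg : (𝒢.toRelu C A b).aggFeat agg G ℓ v ᵥ* 𝒢.reluDecode ℓ = 𝒢.aggFeat agg G ℓ v) :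
    (𝒢.toRelu C A b).feat agg G (ℓ + 1) v
      = Fin.append (relu ∘ 𝒢.preact C A b agg G ℓ v) (relu ∘ (𝒢.preact C A b agg G ℓ v - 1)) := by
  rw [feat_succ]
  change relu ∘ _ = _
  rw [← vecMul_vecMul, ← vecMul_vecMul, hfeat, hagg, vecMul_dupCols, vecMul_dupCols,
    ← Fin.comp_append]
  congr 1
  funext k
  refine Fin.addCases (fun i => ?_) (fun i => ?_) k
  · simp only [Pi.add_apply, Fin.append_left, preact]
  · simp only [Pi.add_apply, Pi.sub_apply, Fin.append_right, preact]
    ring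

lemma toRelu_decode
    (hcom : 𝒢.IsSimpleWith reluStar C A b) :
    ∀ ℓ ≤ 𝒢.L,
      (∀ v, (𝒢.toRelu C A b).feat agg G ℓ v ᵥ* 𝒢.reluDecode ℓ = 𝒢.feat agg G ℓ v) ∧
      (∀ v, (𝒢.toRelu C A b).aggFeat agg G ℓ v ᵥ* 𝒢.reluDecode ℓ = 𝒢.aggFeat agg G ℓ v)
  | 0, _ => ⟨fun _ => vecMul_one _, fun _ => vecMul_one _⟩
  | ℓ + 1, hℓ => by
    obtain ⟨hfeat, hagg⟩ := toRelu_decode hcom ℓ (by omega)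
    have hsucc := fun u => toRelu_feat_succ_of_decode (hfeat u) (hagg u)
    have hold := feat_succ_eq_reluStar (agg := agg) (G := G) hcom (ℓ := ℓ) hℓ
    refine ⟨fun v => ?_, fun v => ?_⟩
    · change _ ᵥ* Matrix.oneNegOne _ = _
      rw [hsucc, append_vecMul_oneNegOne, hold]
      funext j
      exact relu_sub_relu_sub_one _
    · change _ ᵥ* Matrix.oneNegOne _ = _
      unfold aggFeat
      simp only [hsucc, hold]
      rw [Agg.apply_append, append_vecMul_oneNegOne]
      funext j
      exact Agg.apply_relu_sub_apply_relu_sub_one _ _ _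

lemma feat_eq_min_toRelu_feat
    (hcom : 𝒢.IsSimpleWith reluStar C A b)
    {ℓ : ℕ} (hℓ : ℓ ≤ 𝒢.L) (v : G.V) (i : Fin (𝒢.δ ℓ)) :
    𝒢.feat agg G ℓ v i = min ((𝒢.toRelu C A b).feat agg G ℓ v (𝒢.reluLift ℓ i)) 1 := by
  cases ℓ with
  | zero =>
    change _ = min (𝒢.feat agg G 0 v i) 1
    simp only [feat]
    split_ifs <;> norm_num
  | succ ℓ =>
    obtain ⟨hfeat, hagg⟩ := toRelu_decode (agg := agg) (G := G) hcom ℓ (by omega)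
    rw [toRelu_feat_succ_of_decode (hfeat v) (hagg v), feat_succ_eq_reluStar hcom hℓ]
    rw [reluLift, Fin.append_left]
    rfl

lemma accepts_toRelu_iff
    (hcom : 𝒢.IsSimpleWith reluStar C A b)
    (hthr : if 𝒢.clsStrict then 𝒢.clsThr < 1 else 𝒢.clsThr ≤ 1) (v : G.V) :
    (𝒢.toRelu C A b).accepts agg G v ↔ 𝒢.accepts agg G v := by
  unfold accepts
  rw [feat_eq_min_toRelu_feat hcom le_rfl]
  exact (threshold_min_iff _ hthr).symm

lemma not_accepts_of_not_lt_one
    (hcom : 𝒢.IsSimpleWith reluStar C A b)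
    (hthr : ¬ if 𝒢.clsStrict then 𝒢.clsThr < 1 else 𝒢.clsThr ≤ 1) (v : G.V) :
    ¬ 𝒢.accepts agg G v := by
  unfold accepts
  rw [feat_eq_min_toRelu_feat hcom le_rfl]
  exact not_threshold_min _ hthr

end ToRelu

variable (α) in
def rejectAll : GNN α where
  L := 1
  δ ℓ := if ℓ = 0 then Fintype.card α else 1
  hδ0 := if_pos rfl
  com _ _ _ _ := 0
  clsIdx := ⟨0, by simp⟩
  clsStrict := false
  clsThr := 1

lemma rejectAll_isSimple : (rejectAll α).IsSimple relu :=
  fun _ _ => ⟨fun _ _ => 0, fun _ _ => 0, fun _ => 0, fun _ _ _ => by simp [rejectAll, relu]⟩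

lemma not_accepts_rejectAll (agg : Agg) (G : LabeledGraph α) (v : G.V) :
    ¬ (rejectAll α).accepts agg G v :=
  show ¬ (1 : ℝ) ≤ 0 by norm_num

end GNN

end

/-- For AGG ∈ {SUM, MEAN, MAX}: if a vertex property is defined by a
simple AGG-GNN with truncated ReLU activation, then it is also defined by a simple
AGG-GNN with ReLU activation. -/
theorem stmt0 {α : Type} [Fintype α] (agg : Agg) (𝒢 : GNN α) (h : 𝒢.IsSimple reluStar) :
    ∃ 𝒢' : GNN α, 𝒢'.IsSimple relu ∧
      ∀ (G : LabeledGraph α) (v : G.V), (𝒢'.accepts agg G v ↔ 𝒢.accepts agg G v) := by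
  obtain ⟨C, A, b, hcom⟩ := h.exists_isSimpleWith
  by_cases hthr : if 𝒢.clsStrict then 𝒢.clsThr < 1 else 𝒢.clsThr ≤ 1
  · exact ⟨𝒢.toRelu C A b, 𝒢.toRelu_isSimple C A b,
      fun G v => GNN.accepts_toRelu_iff hcom hthr v⟩
  · exact ⟨GNN.rejectAll α, GNN.rejectAll_isSimple, fun G v =>
      iff_of_false (GNN.not_accepts_rejectAll agg G v) (GNN.not_accepts_of_not_lt_one hcom hthr v)⟩
end

section
/- There is no GML formula equivalent to the RML formula ◊^{≥1/2}P, that is, there is no GML formula ψ such that for all pointed Π-labeled graphs (G,v) with P ∈ Π: G,v ⊨ ψ iff G,v ⊨ ◊^{≥1/2}P. -/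
open scoped Classical

/-! A graded formula counts successors only up to its largest grade `c`, so it cannot tell apart
the roots of the stars with `c` leaves labelled `P` and `c`, resp. `c + 1`, unlabelled leaves;
yet exactly half, resp. fewer than half, of the successors satisfy `P` there. -/

def GML.maxGrade {α : Type} : GML α → ℕ
  | .atom _ => 0
  | .neg φ => φ.maxGrade
  | .or φ ψ => max φ.maxGrade ψ.maxGrade
  | .dia n φ => max n φ.maxGrade

/-- Truth of a formula at a vertex without successors and with labels `l`. -/
def GML.satDeadEnd {α : Type} (l : α → Prop) : GML α → Prop
  | .atom p => l p
  | .neg φ => ¬ φ.satDeadEnd l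
  | .or φ ψ => φ.satDeadEnd l ∨ ψ.satDeadEnd l
  | .dia n _ => n = 0

theorem GML.sat_iff_satDeadEnd {α : Type} {G : LabeledGraph α} {v : G.V}
    (hv : ∀ u, ¬ G.adj v u) (φ : GML α) : GML.sat G φ v ↔ φ.satDeadEnd (G.label v) := by
  induction φ with
  | atom p => rfl
  | neg φ ih => exact not_congr ih
  | or φ ψ ih₁ ih₂ => exact or_congr ih₁ ih₂
  | dia n φ _ =>
    have hempty : {u | G.adj v u ∧ GML.sat G φ u} = ∅ :=
      Set.eq_empty_of_forall_notMem fun u hu => hv u hu.1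
    simp [GML.sat, GML.satDeadEnd, hempty]

theorem Set.ncard_setOf_sum {ι κ : Type} [Fintype ι] [Fintype κ] (p : ι ⊕ κ → Prop)
    (q₁ q₂ : Prop) (h₁ : ∀ i, p (.inl i) ↔ q₁) (h₂ : ∀ j, p (.inr j) ↔ q₂) :
    {x | p x}.ncard
      = (if q₁ then Fintype.card ι else 0) + (if q₂ then Fintype.card κ else 0) := by
  rw [Set.ncard_eq_toFinset_card', Set.toFinset_ofPred, Finset.card_filter,
    Fintype.sum_sum_type]
  simp [h₁, h₂]

/-- Root `none`, with `a` leaves labelled `{P}` and `b` unlabelled leaves. -/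
abbrev starGraph {α : Type} (P : α) (a b : ℕ) : LabeledGraph α where
  V := Option (Fin a ⊕ Fin b)
  adj v u := v = none ∧ u.isSome
  label v p := p = P ∧ ∃ i, v = some (.inl i)

theorem ncard_starGraph_succ_root {α : Type} (P : α) (a b : ℕ)
    (Q : (starGraph P a b).V → Prop) (q₁ q₂ : Prop)
    (h₁ : ∀ i, Q (some (.inl i)) ↔ q₁) (h₂ : ∀ j, Q (some (.inr j)) ↔ q₂) :
    {u | (starGraph P a b).adj none u ∧ Q u}.ncard
      = (if q₁ then a else 0) + (if q₂ then b else 0) := by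
  have hset : {u | (starGraph P a b).adj none u ∧ Q u} = some '' {x | Q (some x)} := by
    ext (_ | x) <;> simp
  rw [hset, Set.ncard_image_of_injective _ (Option.some_injective _),
    Set.ncard_setOf_sum _ q₁ q₂ h₁ h₂, Fintype.card_fin, Fintype.card_fin]

theorem GML.ncard_starGraph_succ_root_sat {α : Type} (P : α) (a b : ℕ) (φ : GML α) :
    {u | (starGraph P a b).adj none u ∧ GML.sat (starGraph P a b) φ u}.ncard
      = (if φ.satDeadEnd (· = P) then a else 0)
        + (if φ.satDeadEnd (fun _ => False) then b else 0) := by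
  apply ncard_starGraph_succ_root
  all_goals
    intro x
    rw [GML.sat_iff_satDeadEnd (by simp)]
    congr! 1
    funext p
    simp

theorem GML.sat_starGraph_root_iff {α : Type} (P : α) {a b a' b' c : ℕ}
    (ha : c ≤ a) (hb : c ≤ b) (ha' : c ≤ a') (hb' : c ≤ b')
    (φ : GML α) (hφ : φ.maxGrade ≤ c) :
    GML.sat (starGraph P a b) φ none ↔ GML.sat (starGraph P a' b') φ none := by
  induction φ with
  | atom p => simp [GML.sat]
  | neg φ ih => exact not_congr (ih hφ)
  | or φ ψ ih₁ ih₂ =>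
    exact or_congr (ih₁ (le_of_max_le_left hφ)) (ih₂ (le_of_max_le_right hφ))
  | dia n φ _ =>
    have hn : n ≤ c := le_of_max_le_left hφ
    rw [GML.sat, GML.sat, GML.ncard_starGraph_succ_root_sat, GML.ncard_starGraph_succ_root_sat]
    split_ifs <;> omega

theorem RML.sat_diaGe_half_starGraph_root_iff {α : Type} (P : α) (a b : ℕ) :
    RML.sat (starGraph P a b) (.diaGe half (.atom P)) none ↔ b ≤ a := by
  have hP :
      {u | (starGraph P a b).adj none u ∧ RML.sat (starGraph P a b) (.atom P) u}.ncard = a := by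
    simpa using ncard_starGraph_succ_root P a b _ True False (by simp [RML.sat]) (by simp [RML.sat])
  have hN : ((starGraph P a b).nbhd none).ncard = a + b := by
    simpa [LabeledGraph.nbhd] using
      ncard_starGraph_succ_root P a b (fun _ => True) True True (by simp) (by simp)
  rw [RML.sat, hP, hN, half]
  rcases Nat.eq_zero_or_pos (a + b) with hab | hab
  · have hne : ¬ ((starGraph P a b).nbhd none).Nonempty := by
      rw [← Set.ncard_pos, hN]
      omega
    simp only [hne, false_imp_iff, true_iff]
    omega
  · have hne : ((starGraph P a b).nbhd none).Nonempty := by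
      rw [← Set.ncard_pos, hN]
      exact hab
    rw [forall_prop_of_true hne, le_div_iff₀ (by exact_mod_cast hab)]
    rw [← Nat.cast_le (α := ℝ)]
    push_cast
    constructor <;> intro h <;> linarith

/-- There is no GML formula equivalent to the RML formula ◊^{≥1/2}P. -/
theorem stmt1 {α : Type} (P : α) :
    ¬ ∃ ψ : GML α, ∀ (G : LabeledGraph α) (v : G.V),
      GML.sat G ψ v ↔ RML.sat G (RML.diaGe half (RML.atom P)) v := by
  rintro ⟨ψ, hψ⟩
  have h := GML.sat_starGraph_root_iff P le_rfl le_rfl le_rfl (Nat.le_succ _) ψ le_rfl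
  rw [hψ, hψ, RML.sat_diaGe_half_starGraph_root_iff, RML.sat_diaGe_half_starGraph_root_iff] at h
  omega
end

section
/- There is no RML formula equivalent to the GML formula ◊^{≥2}P, that is, there is no RML formula ψ such that for all pointed Π-labeled graphs (G,v) with P ∈ Π: G,v ⊨ ψ iff G,v ⊨ ◊^{≥2}P. -/
open scoped Classical

/-! Ratio modal logic only sees the proportion of successors satisfying a formula, and these
proportions are unchanged when every vertex is replaced by `c > 0` indistinguishable copies.
So RML cannot separate a single `P`-successor from its `2`-scaling, which has two. -/

lemma Set.ncard_preimage_fst_fin {β : Type} (S : Set β) (c : ℕ) :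
    (Prod.fst ⁻¹' S : Set (β × Fin c)).ncard = S.ncard * c := by
  rw [← Set.prod_univ, Set.ncard_prod, Set.ncard_univ, Nat.card_eq_fintype_card,
    Fintype.card_fin]

namespace LabeledGraph

variable {α : Type}

lemma ncard_scale_successors (G : LabeledGraph α) (c : ℕ) (p : (G.scale c).V)
    (Q : G.V → Prop) :
    {u | (G.scale c).adj p u ∧ Q u.1}.ncard = {u | G.adj p.1 u ∧ Q u}.ncard * c :=
  Set.ncard_preimage_fst_fin {u | G.adj p.1 u ∧ Q u} c

lemma ncard_nbhd_scale (G : LabeledGraph α) (c : ℕ) (p : (G.scale c).V) :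
    ((G.scale c).nbhd p).ncard = (G.nbhd p.1).ncard * c :=
  Set.ncard_preimage_fst_fin (G.nbhd p.1) c

lemma nbhd_scale_nonempty_iff (G : LabeledGraph α) {c : ℕ} (hc : 0 < c)
    (p : (G.scale c).V) : ((G.scale c).nbhd p).Nonempty ↔ (G.nbhd p.1).Nonempty :=
  ⟨fun ⟨q, hq⟩ => ⟨q.1, hq⟩, fun ⟨u, hu⟩ => ⟨(u, ⟨0, hc⟩), hu⟩⟩

lemma successor_ratio_scale (G : LabeledGraph α) {c : ℕ} (hc : 0 < c) (p : (G.scale c).V)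
    (Q : G.V → Prop) :
    ({u | (G.scale c).adj p u ∧ Q u.1}.ncard : ℝ) / ((G.scale c).nbhd p).ncard
      = ({u | G.adj p.1 u ∧ Q u}.ncard : ℝ) / (G.nbhd p.1).ncard := by
  rw [ncard_scale_successors, ncard_nbhd_scale]
  push_cast
  exact mul_div_mul_right _ _ (by exact_mod_cast hc.ne')

end LabeledGraph

open LabeledGraph

theorem RML.sat_scale {α : Type} {c : ℕ} (hc : 0 < c) (G : LabeledGraph α) (ψ : RML α)
    (p : (G.scale c).V) : RML.sat (G.scale c) ψ p ↔ RML.sat G ψ p.1 := by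
  induction ψ generalizing p with
  | atom q => rfl
  | neg φ ih => simp only [RML.sat, ih]
  | or φ χ ihφ ihχ => simp only [RML.sat, ihφ, ihχ]
  | diaGe r φ ih | diaGt r φ ih =>
    have hsucc : {u | (G.scale c).adj p u ∧ RML.sat (G.scale c) φ u}
        = {u | (G.scale c).adj p u ∧ RML.sat G φ u.1} := by
      ext q; exact and_congr_right' (ih q)
    simp only [RML.sat, hsucc, successor_ratio_scale G hc, nbhd_scale_nonempty_iff G hc]

theorem GML.sat_dia_atom_scale {α : Type} (G : LabeledGraph α) (c n : ℕ) (P : α)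
    (p : (G.scale c).V) :
    GML.sat (G.scale c) (GML.dia n (GML.atom P)) p
      ↔ n ≤ {u | G.adj p.1 u ∧ G.label u P}.ncard * c :=
  iff_of_eq (congrArg (n ≤ ·) (ncard_scale_successors G c p (G.label · P)))

lemma exists_vertex_with_one_labeled_successor {α : Type} (P : α) :
    ∃ (G : LabeledGraph α) (v : G.V), {u | G.adj v u ∧ G.label u P}.ncard = 1 := by
  refine ⟨{ V := Fin 2, adj := fun v u => v = 0 ∧ u = 1, label := fun v _ => v = 1 },
    (0 : Fin 2), Set.ncard_eq_one.2 ⟨(1 : Fin 2), ?_⟩⟩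
  ext u
  simp

/-- There is no RML formula equivalent to the GML formula ◊^{≥2}P. -/
theorem stmt2 {α : Type} (P : α) :
    ¬ ∃ ψ : RML α, ∀ (G : LabeledGraph α) (v : G.V),
      RML.sat G ψ v ↔ GML.sat G (GML.dia 2 (GML.atom P)) v := by
  rintro ⟨ψ, hψ⟩
  obtain ⟨G, v, hv⟩ := exists_vertex_with_one_labeled_successor P
  have hscaled : RML.sat (G.scale 2) ψ (v, 0) :=
    (hψ _ _).2 ((GML.sat_dia_atom_scale G 2 2 P (v, 0)).2 (by simp [hv]))
  have hsingle : ¬ RML.sat G ψ v := by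
    simp only [hψ, GML.sat, hv]
    omega
  exact hsingle ((RML.sat_scale two_pos G ψ (v, 0)).1 hscaled)
end

section
/- For every RML formula φ and every n ≥ 1 there exists a GML formula ψ such that for all pointed Π-labeled graphs (G,v) with at most n vertices: G,v ⊨ φ iff G,v ⊨ ψ (i.e., RML is non-uniformly subsumed by GML). -/
open scoped Classical

namespace RMLtoGML

variable {α : Type}

/-- Conjunction in GML. -/
def gand (a b : GML α) : GML α := .neg (.or (.neg a) (.neg b))

/-- A tautology in GML built from an arbitrary formula. -/
def gtop (t : GML α) : GML α := .or t (.neg t)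

/-- An unsatisfiable GML formula built from an arbitrary formula. -/
def gbot (t : GML α) : GML α := .neg (gtop t)

lemma sat_gand (G : LabeledGraph α) (a b : GML α) (v : G.V) :
    GML.sat G (gand a b) v ↔ GML.sat G a v ∧ GML.sat G b v := by
  simp only [gand, GML.sat]; tauto

lemma sat_gtop (G : LabeledGraph α) (t : GML α) (v : G.V) :
    GML.sat G (gtop t) v := by
  simp only [gtop, GML.sat]; tauto

lemma sat_gbot (G : LabeledGraph α) (t : GML α) (v : G.V) :
    ¬ GML.sat G (gbot t) v := by
  simp only [gbot, gtop, GML.sat]; tauto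

/-- A GML formula expressing that the out-degree equals `d`. -/
def edeg (t : GML α) (d : ℕ) : GML α :=
  gand (.dia d (gtop t)) (.neg (.dia (d+1) (gtop t)))

lemma sat_dia_gtop (G : LabeledGraph α) (t : GML α) (d : ℕ) (v : G.V) :
    GML.sat G (.dia d (gtop t)) v ↔ d ≤ (G.nbhd v).ncard := by
  have hset : {u | G.adj v u ∧ GML.sat G (gtop t) u} = G.nbhd v := by
    ext u; simp [LabeledGraph.nbhd, sat_gtop]
  show d ≤ {u | G.adj v u ∧ GML.sat G (gtop t) u}.ncard ↔ _
  rw [hset]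

lemma sat_edeg (G : LabeledGraph α) (t : GML α) (d : ℕ) (v : G.V) :
    GML.sat G (edeg t d) v ↔ (G.nbhd v).ncard = d := by
  rw [edeg, sat_gand]
  have hneg : GML.sat G (GML.neg (.dia (d+1) (gtop t))) v
      ↔ ¬ GML.sat G (.dia (d+1) (gtop t)) v := Iff.rfl
  rw [hneg, sat_dia_gtop, sat_dia_gtop]
  omega

lemma sat_foldr (G : LabeledGraph α) (l : List (GML α)) (t : GML α) (v : G.V) :
    GML.sat G (l.foldr .or (gbot t)) v ↔ ∃ ψ ∈ l, GML.sat G ψ v := by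
  induction l with
  | nil => simpa using sat_gbot G t v
  | cons a l ih =>
      simp only [List.foldr_cons, GML.sat, ih, List.mem_cons]
      constructor
      · rintro (h | ⟨ψ, hψ, h⟩)
        · exact ⟨a, Or.inl rfl, h⟩
        · exact ⟨ψ, Or.inr hψ, h⟩
      · rintro ⟨ψ, (rfl | hψ), h⟩
        · exact Or.inl h
        · exact Or.inr ⟨ψ, hψ, h⟩

/-- Translation of RML into GML, correct on graphs with at most `n` vertices. -/
noncomputable def tr (n : ℕ) : RML α → GML α
  | .atom p => .atom p
  | .neg φ => .neg (tr n φ)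
  | .or φ ψ => .or (tr n φ) (tr n ψ)
  | .diaGe r φ =>
      ((List.range (n+1)).map (fun d =>
        gand (edeg (tr n φ) d) (.dia ⌈(r : ℝ) * d⌉₊ (tr n φ)))).foldr .or (gbot (tr n φ))
  | .diaGt r φ =>
      ((List.range (n+1)).map (fun d =>
        gand (edeg (tr n φ) d) (.dia (⌊(r : ℝ) * d⌋₊ + 1) (tr n φ)))).foldr .or (gbot (tr n φ))

lemma nbhd_ncard_le (G : LabeledGraph α) (v : G.V) (n : ℕ)
    (hG : Fintype.card G.V ≤ n) : (G.nbhd v).ncard ≤ n := by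
  calc (G.nbhd v).ncard ≤ (Set.univ : Set G.V).ncard :=
        Set.ncard_le_ncard (Set.subset_univ _) (Set.toFinite _)
    _ = Fintype.card G.V := by rw [Set.ncard_univ, Nat.card_eq_fintype_card]
    _ ≤ n := hG

lemma tr_correct (n : ℕ) (φ : RML α) (G : LabeledGraph α)
    (hG : Fintype.card G.V ≤ n) (v : G.V) :
    RML.sat G φ v ↔ GML.sat G (tr n φ) v := by
  induction φ generalizing v with
  | atom p => simp [RML.sat, tr, GML.sat]
  | neg φ ih => simp only [RML.sat, tr, GML.sat]; rw [ih]
  | or φ ψ ih1 ih2 => simp only [RML.sat, tr, GML.sat]; rw [ih1, ih2]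
  | diaGe r φ ih =>
      have hSet : {u | G.adj v u ∧ GML.sat G (tr n φ) u}
          = {u | G.adj v u ∧ RML.sat G φ u} := by
        ext u; simp only [Set.mem_setOf_eq]; rw [ih]
      set c := {u | G.adj v u ∧ RML.sat G φ u}.ncard with hc
      set d0 := (G.nbhd v).ncard with hd0
      have hd0n : d0 ≤ n := nbhd_ncard_le G v n hG
      have hRHS : GML.sat G (tr n (.diaGe r φ)) v ↔ ⌈(r : ℝ) * d0⌉₊ ≤ c := by
        rw [tr, sat_foldr]
        constructor
        · rintro ⟨ψ, hψ, hsat⟩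
          simp only [List.mem_map, List.mem_range] at hψ
          obtain ⟨d, _, rfl⟩ := hψ
          rw [sat_gand, sat_edeg] at hsat
          obtain ⟨hdeq, hdia⟩ := hsat
          simp only [GML.sat, hSet] at hdia
          have hdd : d0 = d := by rw [hd0]; exact hdeq
          rw [hdd]
          exact hdia
        · intro h
          refine ⟨_, List.mem_map.mpr ⟨d0, List.mem_range.mpr (by omega), rfl⟩, ?_⟩
          rw [sat_gand, sat_edeg]
          refine ⟨rfl, ?_⟩
          simp only [GML.sat, hSet]
          exact h
      rw [hRHS]
      simp only [RML.sat]
      rcases eq_or_ne d0 0 with h0 | h0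
      · have hempty : ¬ (G.nbhd v).Nonempty := by
          rw [Set.nonempty_iff_ne_empty]
          simp only [ne_eq, not_not]
          exact (Set.ncard_eq_zero (Set.toFinite _)).mp h0
        rw [h0]
        simp [hempty]
      · have hne : (G.nbhd v).Nonempty := by
          rw [Set.nonempty_iff_ne_empty]
          intro h; rw [h] at hd0; simp [hd0] at h0
        have hd0pos : (0 : ℝ) < (d0 : ℝ) := by exact_mod_cast Nat.pos_of_ne_zero h0
        constructor
        · intro h
          have := h hne
          rw [le_div_iff₀ hd0pos] at this
          rw [Nat.ceil_le]
          linarith [this]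
        · intro h _
          rw [le_div_iff₀ hd0pos]
          rw [Nat.ceil_le] at h
          linarith [h]
  | diaGt r φ ih =>
      have hSet : {u | G.adj v u ∧ GML.sat G (tr n φ) u}
          = {u | G.adj v u ∧ RML.sat G φ u} := by
        ext u; simp only [Set.mem_setOf_eq]; rw [ih]
      set c := {u | G.adj v u ∧ RML.sat G φ u}.ncard with hc
      set d0 := (G.nbhd v).ncard with hd0
      have hd0n : d0 ≤ n := nbhd_ncard_le G v n hG
      have hRHS : GML.sat G (tr n (.diaGt r φ)) v ↔ ⌊(r : ℝ) * d0⌋₊ + 1 ≤ c := by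
        rw [tr, sat_foldr]
        constructor
        · rintro ⟨ψ, hψ, hsat⟩
          simp only [List.mem_map, List.mem_range] at hψ
          obtain ⟨d, _, rfl⟩ := hψ
          rw [sat_gand, sat_edeg] at hsat
          obtain ⟨hdeq, hdia⟩ := hsat
          simp only [GML.sat, hSet] at hdia
          have hdd : d0 = d := by rw [hd0]; exact hdeq
          rw [hdd, hc]
          exact hdia
        · intro h
          refine ⟨_, List.mem_map.mpr ⟨d0, List.mem_range.mpr (by omega), rfl⟩, ?_⟩
          rw [sat_gand, sat_edeg]
          refine ⟨rfl, ?_⟩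
          simp only [GML.sat, hSet]
          exact h
      rw [hRHS]
      simp only [RML.sat]
      have hrd : (0 : ℝ) ≤ (r : ℝ) * d0 := by
        have := r.2.1
        positivity
      rcases eq_or_ne d0 0 with h0 | h0
      · have hempty : ¬ (G.nbhd v).Nonempty := by
          rw [Set.nonempty_iff_ne_empty]
          simp only [ne_eq, not_not]
          exact (Set.ncard_eq_zero (Set.toFinite _)).mp h0
        have hcle : c ≤ d0 := by
          apply Set.ncard_le_ncard _ (Set.toFinite _)
          intro u hu; exact hu.1
        constructor
        · rintro ⟨h, _⟩; exact absurd h hempty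
        · intro h; omega
      · have hne : (G.nbhd v).Nonempty := by
          rw [Set.nonempty_iff_ne_empty]
          intro h; rw [h] at hd0; simp [hd0] at h0
        have hd0pos : (0 : ℝ) < (d0 : ℝ) := by exact_mod_cast Nat.pos_of_ne_zero h0
        constructor
        · rintro ⟨_, h⟩
          rw [lt_div_iff₀ hd0pos] at h
          have : ⌊(r : ℝ) * d0⌋₊ < c := (Nat.floor_lt hrd).mpr h
          omega
        · intro h
          refine ⟨hne, ?_⟩
          rw [lt_div_iff₀ hd0pos]
          have : ⌊(r : ℝ) * d0⌋₊ < c := by omega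
          exact (Nat.floor_lt hrd).mp this

end RMLtoGML

/-- For every RML formula φ and every n ≥ 1 there exists a GML formula ψ
equivalent to φ on all pointed graphs with at most n vertices. -/
theorem stmt3 {α : Type} (φ : RML α) (n : ℕ) (hn : 1 ≤ n) :
    ∃ ψ : GML α, ∀ (G : LabeledGraph α) (v : G.V), Fintype.card G.V ≤ n →
      (RML.sat G φ v ↔ GML.sat G ψ v) := by
  exact ⟨RMLtoGML.tr n φ, fun G v hG => RMLtoGML.tr_correct n φ G hG v⟩
end

section
/- For every RML formula φ over Π and every n ≥ 1, there exists a simple Mean-GNN with truncated ReLU activation ReLU*(x) = min(max(0,x),1) that accepts a pointed Π-labeled graph (G,v) with at most n vertices if and only if G,v ⊨ φ. -/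
open scoped Classical

/-!
All subformulas of `φ` are evaluated in parallel: there is one feature per subformula and one
constant feature `1`, and every layer applies the same affine map, which recomputes each subformula
from the current values of its immediate subformulas. By induction on the formula, a subformula of
height `h` holds its exact 0/1 truth value from layer `h + 1` on.

The Boolean connectives are affine on 0/1 values, so `reluStar` computes them exactly. For a diamond
with ratio `r`, the mean over the successors of the `ψ`-feature minus `r` times the mean of the
constant feature is a margin `d` from a finite set of reals that depends only on `n` and `r`. Hence
`d` is `0` or at least some `g > 0` in absolute value, and `reluStar (d / g + 1)` and
`reluStar (d / g)` are the indicators of `0 ≤ d` and `0 < d`, which decide `◊^{≥r}ψ` and `◊^{>r}ψ`.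
-/

lemma Finset.exists_pos_le_dist_of_ne {X : Type*} [MetricSpace X] (s : Finset X) (x : X) :
    ∃ ε > 0, ∀ y ∈ s, y ≠ x → ε ≤ dist y x := by
  obtain ⟨ε, hε, hball⟩ := Metric.isOpen_iff.1
    (s.erase x).finite_toSet.isClosed.isOpen_compl x (by simp)
  refine ⟨ε, hε, fun y hy hyx => not_lt.1 fun h => hball (Metric.mem_ball.2 h) ?_⟩
  simp [hy, hyx]

section reluStar

noncomputable def truth (P : Prop) : ℝ := if P then 1 else 0

lemma truth_of {P : Prop} (h : P) : truth P = 1 := if_pos h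

lemma truth_of_not {P : Prop} (h : ¬P) : truth P = 0 := if_neg h

lemma one_le_truth {P : Prop} : 1 ≤ truth P ↔ P := by
  by_cases h : P <;> simp [truth, h]

lemma reluStar_of_nonpos {x : ℝ} (hx : x ≤ 0) : reluStar x = 0 := by
  simp [reluStar, hx]

lemma reluStar_of_one_le {x : ℝ} (hx : 1 ≤ x) : reluStar x = 1 := by
  simp [reluStar, hx, zero_le_one.trans hx]

variable (P Q : Prop)

lemma reluStar_truth : reluStar (truth P) = truth P := by
  by_cases h : P <;> norm_num [truth, reluStar, h]

lemma reluStar_one_sub_truth : reluStar (1 - truth P) = truth ¬P := by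
  by_cases h : P <;> norm_num [truth, reluStar, h]

lemma reluStar_truth_add_truth : reluStar (truth P + truth Q) = truth (P ∨ Q) := by
  by_cases h : P <;> by_cases h' : Q <;> norm_num [truth, reluStar, h, h']

variable {g d : ℝ}

lemma reluStar_inv_mul_add_one (hg : 0 < g) (hd : d ≠ 0 → g ≤ |d|) :
    reluStar (g⁻¹ * d + 1) = truth (0 ≤ d) := by
  rcases lt_trichotomy d 0 with hneg | rfl | hpos
  · have : g ≤ -d := by simpa [abs_of_neg hneg] using hd hneg.ne
    have : g⁻¹ * d ≤ -1 := by rw [inv_mul_le_iff₀ hg]; linarith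
    rw [reluStar_of_nonpos (by linarith), truth_of_not hneg.not_ge]
  · simp [reluStar_of_one_le, truth]
  · have : g ≤ d := by simpa [abs_of_pos hpos] using hd hpos.ne'
    have : 1 ≤ g⁻¹ * d := by rw [le_inv_mul_iff₀ hg]; linarith
    rw [reluStar_of_one_le (by linarith), truth_of hpos.le]

lemma reluStar_inv_mul (hg : 0 < g) (hd : d ≠ 0 → g ≤ |d|) :
    reluStar (g⁻¹ * d) = truth (0 < d) := by
  rcases lt_trichotomy d 0 with hneg | rfl | hpos
  · rw [reluStar_of_nonpos (mul_nonpos_of_nonneg_of_nonpos (inv_pos.2 hg).le hneg.le),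
      truth_of_not hneg.not_gt]
  · simp [reluStar_of_nonpos, truth]
  · have : g ≤ d := by simpa [abs_of_pos hpos] using hd hpos.ne'
    rw [reluStar_of_one_le (by rw [le_inv_mul_iff₀ hg]; linarith), truth_of hpos]

end reluStar

section Margin

/-- With `x / 0 = 0`, the factor `N / N` is the indicator of `N ≠ 0`: the margin vanishes at a
vertex without successors. -/
noncomputable def diaMargin (r : ℝ) (K N : ℕ) : ℝ := K / N - r * (N / N)

lemma diaMargin_of_pos {r : ℝ} {K N : ℕ} (hN : 0 < N) : diaMargin r K N = K / N - r := by
  rw [diaMargin, div_self (by positivity), mul_one]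

def IsMarginGap (n : ℕ) (r g : ℝ) : Prop :=
  0 < g ∧ ∀ K ≤ n, ∀ N ≤ n, diaMargin r K N ≠ 0 → g ≤ |diaMargin r K N|

lemma exists_isMarginGap (n : ℕ) (r : ℝ) : ∃ g, IsMarginGap n r g := by
  obtain ⟨g, hg, hle⟩ := Finset.exists_pos_le_dist_of_ne
    ((Finset.range (n + 1) ×ˢ Finset.range (n + 1)).image fun p => diaMargin r p.1 p.2) 0
  refine ⟨g, hg, fun K hK N hN hne => ?_⟩
  simpa [Real.dist_eq] using hle _ (Finset.mem_image.2 ⟨(K, N), by simp; omega, rfl⟩) hne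

end Margin

lemma LabeledGraph.coe_nbhdFinset {α : Type} (G : LabeledGraph α) (v : G.V) :
    (G.nbhdFinset v : Set G.V) = G.nbhd v := by
  ext u
  simp [LabeledGraph.nbhdFinset, LabeledGraph.nbhd]

namespace RML

variable {α : Type} (G : LabeledGraph α) (v : G.V) (r : Set.Icc (0:ℝ) 1) (ψ : RML α)

lemma ncard_adj_sat :
    {u | G.adj v u ∧ sat G ψ u}.ncard = ((G.nbhdFinset v).filter (sat G ψ)).card := by
  rw [Set.ncard_eq_toFinset_card']
  congr 1
  ext u
  simp [LabeledGraph.nbhdFinset]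

lemma sat_diaGe_iff : sat G (diaGe r ψ) v ↔
    0 ≤ diaMargin r ((G.nbhdFinset v).filter (sat G ψ)).card (G.nbhdFinset v).card := by
  rw [sat, ← G.coe_nbhdFinset, Set.ncard_coe_finset, Finset.coe_nonempty, ncard_adj_sat,
    ← Finset.card_pos]
  rcases Nat.eq_zero_or_pos (G.nbhdFinset v).card with hN | hN
  · simp [hN, diaMargin]
  · simp [hN, diaMargin_of_pos]

lemma sat_diaGt_iff : sat G (diaGt r ψ) v ↔
    0 < diaMargin r ((G.nbhdFinset v).filter (sat G ψ)).card (G.nbhdFinset v).card := by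
  rw [sat, ← G.coe_nbhdFinset, Set.ncard_coe_finset, Finset.coe_nonempty, ncard_adj_sat,
    ← Finset.card_pos]
  rcases Nat.eq_zero_or_pos (G.nbhdFinset v).card with hN | hN
  · simp [hN, diaMargin]
  · simp [hN, diaMargin_of_pos]

variable {ψ}

def subformulas : RML α → List (RML α)
  | φ@(atom _) => [φ]
  | φ@(neg ψ) => φ :: ψ.subformulas
  | φ@(or ψ χ) => φ :: (ψ.subformulas ++ χ.subformulas)
  | φ@(diaGe _ ψ) => φ :: ψ.subformulas
  | φ@(diaGt _ ψ) => φ :: ψ.subformulas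

def height : RML α → ℕ
  | atom _ => 0
  | neg ψ => ψ.height + 1
  | or ψ χ => max ψ.height χ.height + 1
  | diaGe _ ψ => ψ.height + 1
  | diaGt _ ψ => ψ.height + 1

lemma mem_subformulas_self (φ : RML α) : φ ∈ φ.subformulas := by
  cases φ <;> simp [subformulas]

lemma subformulas_subset {φ : RML α} (h : ψ ∈ φ.subformulas) :
    ψ.subformulas ⊆ φ.subformulas := by
  induction φ with
  | atom p =>
    obtain rfl : ψ = atom p := by simpa [subformulas] using h
    exact List.Subset.refl _
  | neg χ ih | diaGe _ χ ih | diaGt _ χ ih =>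
    rcases List.mem_cons.1 h with rfl | h
    · exact List.Subset.refl _
    · exact List.Subset.trans (ih h) (List.subset_cons_self _ _)
  | or χ₁ χ₂ ih₁ ih₂ =>
    rcases List.mem_cons.1 h with rfl | h
    · exact List.Subset.refl _
    rcases List.mem_append.1 h with h | h
    · exact List.Subset.trans (ih₁ h) (List.subset_cons_of_subset _ (List.subset_append_left _ _))
    · exact List.Subset.trans (ih₂ h) (List.subset_cons_of_subset _ (List.subset_append_right _ _))

section MeanGNN

variable (φ : RML α)

/-- Feature `i` holds the truth value of the subformula `φ.subformulas[i]`; the last feature is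
the constant `1`. -/
abbrev Feature : Type := Fin (φ.subformulas.length + 1)

noncomputable def index (ψ : RML α) : φ.Feature :=
  ⟨φ.subformulas.idxOf ψ, Nat.lt_succ_of_le List.idxOf_le_length⟩

lemma getElem?_index (h : ψ ∈ φ.subformulas) : φ.subformulas[(φ.index ψ : ℕ)]? = some ψ :=
  List.getElem?_idxOf h

-- The rows of the affine maps, as functions of the subformula held by the output feature
-- (`none` for the constant feature).

noncomputable def selfCoeff : Option (RML α) → φ.Feature → ℝ
  | some (atom p) => Pi.single (φ.index (atom p)) 1
  | some (neg ψ) => -Pi.single (φ.index ψ) 1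
  | some (or ψ χ) => Pi.single (φ.index ψ) 1 + Pi.single (φ.index χ) 1
  | _ => 0

noncomputable def meanCoeff (gap : ℝ → ℝ) : Option (RML α) → φ.Feature → ℝ
  | some (diaGe r ψ) | some (diaGt r ψ) =>
    (gap r)⁻¹ • (Pi.single (φ.index ψ) 1 - (r : ℝ) • Pi.single (Fin.last _) 1)
  | _ => 0

def bias : Option (RML α) → ℝ
  | some (neg _) | some (diaGe _ _) | none => 1
  | _ => 0

variable [Fintype α]

noncomputable def inputCoeff : Option (RML α) → Fin (Fintype.card α) → ℝ
  | some (atom p) => Pi.single (Fintype.equivFin α p) 1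
  | _ => 0

noncomputable def toMeanGNN (gap : ℝ → ℝ) : GNN α where
  L := φ.height + 1
  δ
    | 0 => Fintype.card α
    | _ + 1 => φ.subformulas.length + 1
  hδ0 := rfl
  com
    | 0 => fun xv xa i =>
      reluStar (xv ⬝ᵥ inputCoeff φ.subformulas[i.val]? + xa ⬝ᵥ 0 + bias φ.subformulas[i.val]?)
    | _ + 1 => fun xv xa i =>
      reluStar (xv ⬝ᵥ φ.selfCoeff φ.subformulas[i.val]?
        + xa ⬝ᵥ φ.meanCoeff gap φ.subformulas[i.val]? + bias φ.subformulas[i.val]?)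
  clsIdx := φ.index φ
  clsStrict := false
  clsThr := 1

variable (gap : ℝ → ℝ)

lemma toMeanGNN_isSimple : (φ.toMeanGNN gap).IsSimple reluStar
  | 0, _ => ⟨fun j i => inputCoeff (φ.subformulas[i.val]?) j, fun _ _ => 0,
      fun i => bias φ.subformulas[i.val]?, fun _ _ _ => rfl⟩
  | _ + 1, _ => ⟨fun j i => φ.selfCoeff φ.subformulas[i.val]? j,
      fun j i => φ.meanCoeff gap φ.subformulas[i.val]? j,
      fun i => bias φ.subformulas[i.val]?, fun _ _ _ => rfl⟩

noncomputable def feature (G : LabeledGraph α) (t : ℕ) (v : G.V) : φ.Feature → ℝ :=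
  (φ.toMeanGNN gap).feat .mean G (t + 1) v

variable {φ gap} (G : LabeledGraph α)

lemma feature_last (t : ℕ) (v : G.V) : φ.feature gap G t v (Fin.last _) = 1 := by
  cases t <;> simp [feature, GNN.feat, toMeanGNN, inputCoeff, selfCoeff, meanCoeff, bias, reluStar]

lemma feature_zero_index_atom {p : α} (hp : atom p ∈ φ.subformulas) (v : G.V) :
    φ.feature gap G 0 v (φ.index (atom p)) = truth (G.label v p) := by
  simp [feature, GNN.feat, toMeanGNN, getElem?_index φ hp, inputCoeff, bias]
  exact reluStar_truth _

lemma feature_succ (t : ℕ) (v : G.V) (i : φ.Feature) :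
    φ.feature gap G (t + 1) v i =
      reluStar (φ.feature gap G t v ⬝ᵥ φ.selfCoeff φ.subformulas[i.val]?
        + (fun j => Agg.mean.apply (G.nbhdFinset v) fun u => φ.feature gap G t u j) ⬝ᵥ
          φ.meanCoeff gap φ.subformulas[i.val]?
        + bias φ.subformulas[i.val]?) :=
  rfl

lemma mean_truth {V : Type} (s : Finset V) (P : V → Prop) :
    Agg.mean.apply s (fun u => truth (P u)) = ((s.filter P).card : ℝ) / s.card := by
  rw [Agg.apply, ← Finset.sum_boole]
  rfl

lemma mean_dotProduct_meanCoeff_dia {t : ℕ} {v : G.V} {r : Set.Icc (0:ℝ) 1} {χ : RML α}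
    (hχ : ∀ u, φ.feature gap G t u (φ.index χ) = truth (sat G χ u)) :
    (fun j => Agg.mean.apply (G.nbhdFinset v) fun u => φ.feature gap G t u j) ⬝ᵥ
      ((gap r)⁻¹ • (Pi.single (φ.index χ) 1 - (r : ℝ) • Pi.single (Fin.last _) 1)) =
    (gap r)⁻¹ * diaMargin r ((G.nbhdFinset v).filter (sat G χ)).card (G.nbhdFinset v).card := by
  simp only [dotProduct_smul, dotProduct_sub, dotProduct_single, hχ, feature_last, mean_truth,
    smul_eq_mul, diaMargin]
  simp [Agg.apply]

variable {n : ℕ} (hgap : ∀ r, IsMarginGap n r (gap r)) (hG : Fintype.card G.V ≤ n)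
include hgap hG

theorem feature_index (hψ : ψ ∈ φ.subformulas) {t : ℕ} (ht : ψ.height ≤ t) (v : G.V) :
    φ.feature gap G t v (φ.index ψ) = truth (sat G ψ v) := by
  induction ψ generalizing t v with
  | atom p =>
    induction t generalizing v with
    | zero => exact feature_zero_index_atom G hψ v
    | succ t ih =>
      rw [feature_succ, getElem?_index φ hψ]
      simp only [selfCoeff, meanCoeff, bias, dotProduct_single, dotProduct_zero, mul_one,
        add_zero]
      rw [ih (Nat.zero_le t), reluStar_truth]
  | neg χ ih =>
    obtain ⟨t, rfl⟩ : ∃ t', t = t' + 1 := ⟨t - 1, by simp only [height] at ht; omega⟩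
    have hχ := ih (subformulas_subset hψ (List.mem_cons_of_mem _ χ.mem_subformulas_self))
      (by simpa [height] using ht)
    rw [feature_succ, getElem?_index φ hψ]
    simp only [selfCoeff, meanCoeff, bias, dotProduct_neg, dotProduct_single, dotProduct_zero,
      mul_one, add_zero, hχ, neg_add_eq_sub, reluStar_one_sub_truth, sat]
  | or χ₁ χ₂ ih₁ ih₂ =>
    obtain ⟨t, rfl⟩ : ∃ t', t = t' + 1 := ⟨t - 1, by simp only [height] at ht; omega⟩
    simp only [height, add_le_add_iff_right, max_le_iff] at ht
    have hχ₁ := ih₁ (subformulas_subset hψ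
      (List.mem_cons_of_mem _ (List.mem_append_left _ χ₁.mem_subformulas_self))) ht.1
    have hχ₂ := ih₂ (subformulas_subset hψ
      (List.mem_cons_of_mem _ (List.mem_append_right _ χ₂.mem_subformulas_self))) ht.2
    rw [feature_succ, getElem?_index φ hψ]
    simp only [selfCoeff, meanCoeff, bias, dotProduct_add, dotProduct_single, dotProduct_zero,
      mul_one, add_zero, hχ₁, hχ₂, reluStar_truth_add_truth, sat]
  | diaGe r χ ih | diaGt r χ ih =>
    obtain ⟨t, rfl⟩ : ∃ t', t = t' + 1 := ⟨t - 1, by simp only [height] at ht; omega⟩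
    have hχ := ih (subformulas_subset hψ (List.mem_cons_of_mem _ χ.mem_subformulas_self))
      (by simpa [height] using ht)
    have hN : (G.nbhdFinset v).card ≤ n := (Finset.card_le_univ _).trans hG
    have hsep := (hgap r).2 _ ((Finset.card_filter_le _ (sat G χ)).trans hN) _ hN
    rw [feature_succ, getElem?_index φ hψ]
    simp only [selfCoeff, meanCoeff, bias, dotProduct_zero, zero_add, add_zero,
      mean_dotProduct_meanCoeff_dia G hχ, reluStar_inv_mul_add_one (hgap r).1 hsep,
      reluStar_inv_mul (hgap r).1 hsep, sat_diaGe_iff, sat_diaGt_iff]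

end MeanGNN

end RML

theorem stmt4_general {α : Type} [Fintype α] (φ : RML α) (n : ℕ) :
    ∃ 𝒢 : GNN α, 𝒢.IsSimple reluStar ∧
      ∀ (G : LabeledGraph α) (v : G.V), Fintype.card G.V ≤ n →
        (𝒢.accepts Agg.mean G v ↔ RML.sat G φ v) := by
  choose gap hgap using exists_isMarginGap n
  refine ⟨φ.toMeanGNN gap, φ.toMeanGNN_isSimple gap, fun G v hG => ?_⟩
  change 1 ≤ φ.feature gap G φ.height v (φ.index φ) ↔ _
  rw [RML.feature_index G hgap hG φ.mem_subformulas_self le_rfl, one_le_truth]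

/-- For every RML formula φ and every n ≥ 1, there exists a simple
Mean-GNN with truncated ReLU activation that accepts a pointed graph with at most
n vertices iff the graph satisfies φ. -/
theorem stmt4 {α : Type} [Fintype α] (φ : RML α) (n : ℕ) (hn : 1 ≤ n) :
    ∃ 𝒢 : GNN α, 𝒢.IsSimple reluStar ∧
      ∀ (G : LabeledGraph α) (v : G.V), Fintype.card G.V ≤ n →
        (𝒢.accepts Agg.mean G v ↔ RML.sat G φ v) :=
  stmt4_general φ n
end

section
/- Let f : ℝ → ℝ be continuous and not a polynomial function. Then for every GML formula φ over Π and every n ≥ 1, there exists a simple Sum-GNN with activation function f that accepts a pointed Π-labeled graph (G,v) with at most n vertices if and only if G,v ⊨ φ. -/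
open scoped Classical

/-!
A continuous non-polynomial `f` interpolates: for `m` distinct nodes `x i`, the ridge functions
`t ↦ f (w * t + b)` span all functions on the nodes. Otherwise some `μ ≠ 0` satisfies
`∑ i, μ i * f (w * x i + b) = 0` for all `w, b`; mollifying keeps this relation and makes `f`
smooth, and differentiating `k` times multiplies `μ i` by `∏ (x i - x j)` over `k` nodes `x j`, so
the `(m - 1)`-st derivative of each mollification vanishes. The mollifications are then
polynomials of degree `< m`, and so is their limit `f`.

Hence for every subformula `χ` of `φ` there is a one-hidden-layer network with activation `f`
mapping the number `k ≤ n + 2` of true premises of the outermost connective of `χ` to the truth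
value of `χ`. The GNN runs these gadgets side by side, one layer per level of nesting, and a final
neuron `f (w * [φ] + b)` with `f b < f (w + b)` is thresholded halfway.
-/

open Polynomial Filter Topology MeasureTheory Matrix
open scoped ContDiff Convolution

noncomputable def degreeLTFun (d : ℕ) : Submodule ℝ (ℝ → ℝ) :=
  (degreeLT ℝ d).map (LinearMap.pi fun x => leval x)

theorem isClosed_degreeLTFun (d : ℕ) : IsClosed (degreeLTFun d : Set (ℝ → ℝ)) :=
  ((degreeLT ℝ d).map _).closed_of_finiteDimensional

theorem exists_polynomial_of_mem_degreeLTFun {g : ℝ → ℝ} {d : ℕ} (h : g ∈ degreeLTFun d) :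
    ∃ p : ℝ[X], ∀ x, g x = p.eval x := by
  obtain ⟨p, -, rfl⟩ := h
  exact ⟨p, fun x => rfl⟩

theorem mem_degreeLTFun_of_iteratedDeriv_eq_zero {d : ℕ} {g : ℝ → ℝ} (hg : ContDiff ℝ ∞ g)
    (h : iteratedDeriv d g = 0) : g ∈ degreeLTFun d := by
  induction d generalizing g with
  | zero => simp_all
  | succ d ih =>
    obtain ⟨c, hc⟩ : ∃ c, iteratedDeriv d g = fun _ => c := by
      refine ⟨iteratedDeriv d g 0, funext fun x => is_const_of_deriv_eq_zero ?_ ?_ x 0⟩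
      · exact hg.differentiable_iteratedDeriv d (by exact_mod_cast WithTop.coe_lt_top _)
      · simpa [iteratedDeriv_succ] using congrFun h
    set a := c / d.factorial
    have hpow : ContDiff ℝ ∞ fun x : ℝ => a * x ^ d := by fun_prop
    have hrest : iteratedDeriv d (fun x => g x - a * x ^ d) = 0 := by
      funext x
      rw [iteratedDeriv_fun_sub (contDiff_infty.1 hg d).contDiffAt
        (contDiff_infty.1 hpow d).contDiffAt, iteratedDeriv_const_mul_field, hc]
      simp [a, Nat.descFactorial_self, Nat.factorial_ne_zero]
    have hrest_mem : (fun x => g x - a * x ^ d) ∈ degreeLTFun (d + 1) :=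
      Submodule.map_mono (degreeLT_mono d.le_succ) (ih (hg.sub hpow) hrest)
    have hpow_mem : (fun x : ℝ => a * x ^ d) ∈ degreeLTFun (d + 1) :=
      ⟨C a * X ^ d, by simpa [mem_degreeLT] using
        (degree_C_mul_X_pow_le d a).trans_lt (by exact_mod_cast d.lt_succ_self), by ext; simp⟩
    convert add_mem hrest_mem hpow_mem using 1
    ext; simp

section Interpolation

variable {ι : Type} [Fintype ι]

def RidgeRelation (x μ : ι → ℝ) (G : ℝ → ℝ) : Prop :=
  ∀ w b, ∑ i, μ i * G (w * x i + b) = 0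

namespace RidgeRelation

variable {x μ : ι → ℝ} {G : ℝ → ℝ}

/-- Differentiate the relation along `s ↦ (w + s, b - s * c)`. -/
theorem deriv_mul_sub (h : RidgeRelation x μ G) (hG : Differentiable ℝ G) (c : ℝ) :
    RidgeRelation x (fun i => μ i * (x i - c)) (deriv G) := by
  intro w b
  have hderiv : HasDerivAt (fun s => ∑ i, μ i * G ((x i - c) * s + (w * x i + b)))
      (∑ i, μ i * (deriv G ((x i - c) * 0 + (w * x i + b)) * (x i - c))) 0 := by
    refine HasDerivAt.fun_sum fun i _ => HasDerivAt.const_mul _ ?_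
    exact (hG _).hasDerivAt.comp 0 (((hasDerivAt_id 0).const_mul _).add_const _ |>.congr_deriv
      (by simp))
  have hzero : (fun s => ∑ i, μ i * G ((x i - c) * s + (w * x i + b))) = fun _ => 0 := by
    funext s
    rw [← h (w + s) (b - s * c)]
    exact Finset.sum_congr rfl fun i _ => by ring_nf
  rw [hzero] at hderiv
  simp only [mul_zero, zero_add] at hderiv
  rw [← hderiv.unique (hasDerivAt_const 0 0)]
  exact Finset.sum_congr rfl fun i _ => by ring

theorem iteratedDeriv_prod [DecidableEq ι] (h : RidgeRelation x μ G) (hG : ContDiff ℝ ∞ G)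
    (T : Finset ι) :
    RidgeRelation x (fun i => μ i * ∏ j ∈ T, (x i - x j)) (iteratedDeriv T.card G) := by
  induction T using Finset.induction with
  | empty => simpa [RidgeRelation] using h
  | insert j T hj ih =>
    have hdiff : Differentiable ℝ (iteratedDeriv T.card G) :=
      hG.differentiable_iteratedDeriv _ (by exact_mod_cast WithTop.coe_lt_top _)
    intro w b
    rw [Finset.card_insert_of_notMem hj, iteratedDeriv_succ, ← ih.deriv_mul_sub hdiff (x j) w b]
    exact Finset.sum_congr rfl fun i _ => by simp only [Finset.prod_insert hj]; ring

/-- At `w = 0` with all nodes but `i₀` in the product, only the term of `i₀` survives. -/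
theorem mem_degreeLTFun_of_contDiff (h : RidgeRelation x μ G) (hG : ContDiff ℝ ∞ G)
    (hx : Function.Injective x) (hμ : μ ≠ 0) : G ∈ degreeLTFun (Fintype.card ι) := by
  classical
  obtain ⟨i₀, hi₀⟩ : ∃ i, μ i ≠ 0 := Function.ne_iff.1 hμ
  have hT := h.iteratedDeriv_prod hG (Finset.univ.erase i₀)
  refine Submodule.map_mono (degreeLT_mono (Finset.card_le_univ (Finset.univ.erase i₀)))
    (mem_degreeLTFun_of_iteratedDeriv_eq_zero hG (funext fun b => ?_))
  have hb := hT 0 b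
  rw [Finset.sum_eq_single i₀ (fun i _ hi => by
    simp [Finset.prod_eq_zero (Finset.mem_erase.2 ⟨hi, Finset.mem_univ i⟩)]) (by simp)] at hb
  have hprod : ∏ j ∈ Finset.univ.erase i₀, (x i₀ - x j) ≠ 0 :=
    Finset.prod_ne_zero_iff.2 fun j hj => sub_ne_zero.2 (hx.ne (Finset.ne_of_mem_erase hj).symm)
  simpa [hi₀, hprod] using hb

theorem convolution {ψ : ℝ → ℝ} (h : RidgeRelation x μ G) (hψ : HasCompactSupport ψ)
    (hψc : Continuous ψ) (hG : Continuous G) :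
    RidgeRelation x μ (ψ ⋆[ContinuousLinearMap.lsmul ℝ ℝ, volume] G) := by
  intro w b
  have hint : ∀ i, Integrable (fun t => ψ t * G (w * x i + b - t)) := fun i => by
    simpa [ConvolutionExistsAt] using (hψ.convolutionExists_left
      (ContinuousLinearMap.lsmul ℝ ℝ) hψc hG.locallyIntegrable (w * x i + b))
  simp only [convolution_def, ContinuousLinearMap.lsmul_apply, smul_eq_mul,
    ← integral_const_mul]
  rw [← integral_finsetSum _ fun i _ => (hint i).const_mul _]
  refine integral_eq_zero_of_ae (Eventually.of_forall fun t => ?_)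
  simp only [Pi.zero_apply]
  rw [← mul_zero (ψ t), ← h w (b - t), Finset.mul_sum]
  exact Finset.sum_congr rfl fun i _ => by ring_nf

theorem mem_degreeLTFun_of_continuous (h : RidgeRelation x μ G) (hG : Continuous G)
    (hx : Function.Injective x) (hμ : μ ≠ 0) : G ∈ degreeLTFun (Fintype.card ι) := by
  let φ : ℕ → ContDiffBump (0 : ℝ) := fun k =>
    ⟨1 / (k + 1), 2 / (k + 1), by positivity, by gcongr; norm_num⟩
  let Gk : ℕ → ℝ → ℝ := fun k =>
    (φ k).normed volume ⋆[ContinuousLinearMap.lsmul ℝ ℝ, volume] G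
  have hlim : Tendsto Gk atTop (𝓝 G) := by
    refine tendsto_pi_nhds.2 fun t => ContDiffBump.convolution_tendsto_right_of_continuous ?_ hG t
    show Tendsto (fun k : ℕ => 2 / ((k : ℝ) + 1)) atTop (𝓝 0)
    simpa [div_eq_mul_inv] using (tendsto_one_div_add_atTop_nhds_zero_nat (𝕜 := ℝ)).const_mul 2
  refine (isClosed_degreeLTFun _).mem_of_tendsto hlim (Eventually.of_forall fun k => ?_)
  have hsmooth : ContDiff ℝ ∞ (Gk k) :=
    (φ k).hasCompactSupport_normed.contDiff_convolution_left _ (φ k).contDiff_normed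
      hG.locallyIntegrable
  exact (h.convolution (φ k).hasCompactSupport_normed (φ k).continuous_normed hG)
    |>.mem_degreeLTFun_of_contDiff hsmooth hx hμ

end RidgeRelation

/-- A network with one hidden layer and activation `f`: `g (w, b)` is the output weight of the
hidden neuron `t ↦ f (w * t + b)`. -/
noncomputable def shallowNet (f : ℝ → ℝ) (g : ℝ × ℝ →₀ ℝ) (t : ℝ) : ℝ :=
  g.sum fun p c => c * f (p.1 * t + p.2)

theorem span_ridge_eq_top {f : ℝ → ℝ} (hf : Continuous f)
    (hnp : ¬ ∃ p : ℝ[X], ∀ x, f x = p.eval x) (x : ι → ℝ) (hx : Function.Injective x) :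
    Submodule.span ℝ (Set.range fun p : ℝ × ℝ => fun i => f (p.1 * x i + p.2)) = ⊤ := by
  by_contra hne
  obtain ⟨Λ, hΛ, hker⟩ := Submodule.exists_le_ker_of_lt_top _ (lt_top_iff_ne_top.2 hne)
  have hΛ_apply : ∀ v, Λ v = ∑ i, v i * Λ (Pi.single i 1) := fun v => by
    conv_lhs => rw [← Finset.univ_sum_single v]
    simp only [map_sum]
    refine Finset.sum_congr rfl fun i _ => ?_
    rw [← smul_eq_mul, ← map_smul, ← Pi.single_smul', smul_eq_mul, mul_one]
  have hrel : RidgeRelation x (fun i => Λ (Pi.single i 1)) f := fun w b => by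
    have := hker (Submodule.subset_span ⟨(w, b), rfl⟩)
    rw [LinearMap.mem_ker, hΛ_apply] at this
    simpa [mul_comm] using this
  refine hnp (exists_polynomial_of_mem_degreeLTFun (hrel.mem_degreeLTFun_of_continuous hf hx ?_))
  intro hzero
  exact hΛ (LinearMap.ext fun v => by simp [hΛ_apply v, congrFun hzero])

theorem exists_shallowNet_eq {f : ℝ → ℝ} (hf : Continuous f)
    (hnp : ¬ ∃ p : ℝ[X], ∀ x, f x = p.eval x) (x : ι → ℝ) (hx : Function.Injective x)
    (y : ι → ℝ) : ∃ g : ℝ × ℝ →₀ ℝ, ∀ i, shallowNet f g (x i) = y i := by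
  have hy : y ∈ Submodule.span ℝ (Set.range fun p : ℝ × ℝ => fun i => f (p.1 * x i + p.2)) := by
    rw [span_ridge_eq_top hf hnp x hx]; trivial
  obtain ⟨g, hg⟩ := Finsupp.mem_span_range_iff_exists_finsupp.1 hy
  exact ⟨g, fun i => by simpa [shallowNet, Finsupp.sum] using congrFun hg i⟩

end Interpolation

theorem exists_lt_of_not_polynomial {f : ℝ → ℝ} (hnp : ¬ ∃ p : ℝ[X], ∀ x, f x = p.eval x) :
    ∃ a b, f a < f b := by
  by_contra! h
  exact hnp ⟨C (f 0), fun x => by simpa using le_antisymm (h 0 x) (h x 0)⟩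
namespace GML

variable {α : Type}

def height : GML α → ℕ
  | atom _ => 0
  | neg ψ => ψ.height + 1
  | or ψ χ => max ψ.height χ.height + 1
  | dia _ ψ => ψ.height + 1

noncomputable def subformulas : GML α → Finset (GML α)
  | atom p => {atom p}
  | neg ψ => insert (neg ψ) ψ.subformulas
  | or ψ χ => insert (or ψ χ) (ψ.subformulas ∪ χ.subformulas)
  | dia k ψ => insert (dia k ψ) ψ.subformulas

theorem mem_subformulas_self (φ : GML α) : φ ∈ φ.subformulas := by
  cases φ <;> simp [subformulas]

theorem subformulas_subset {φ ψ : GML α} (h : ψ ∈ φ.subformulas) :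
    ψ.subformulas ⊆ φ.subformulas := by
  induction φ with
  | atom p => simp_all [subformulas]
  | neg φ ih =>
    simp only [subformulas, Finset.mem_insert] at h ⊢
    rcases h with rfl | h
    · simp [subformulas]
    · exact (ih h).trans (Finset.subset_insert _ _)
  | or φ₁ φ₂ ih₁ ih₂ =>
    simp only [subformulas, Finset.mem_insert, Finset.mem_union] at h ⊢
    rcases h with rfl | h | h
    · simp [subformulas]
    · exact (ih₁ h).trans (Finset.subset_union_left.trans (Finset.subset_insert _ _))
    · exact (ih₂ h).trans (Finset.subset_union_right.trans (Finset.subset_insert _ _))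
  | dia k φ ih =>
    simp only [subformulas, Finset.mem_insert] at h ⊢
    rcases h with rfl | h
    · simp [subformulas]
    · exact (ih h).trans (Finset.subset_insert _ _)

theorem mem_subformulas_of_neg {φ ψ : GML α} (h : neg ψ ∈ φ.subformulas) :
    ψ ∈ φ.subformulas :=
  subformulas_subset h (by simp [subformulas, mem_subformulas_self])

theorem mem_subformulas_of_or {φ ψ χ : GML α} (h : or ψ χ ∈ φ.subformulas) :
    ψ ∈ φ.subformulas ∧ χ ∈ φ.subformulas :=
  ⟨subformulas_subset h (by simp [subformulas, mem_subformulas_self]),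
    subformulas_subset h (by simp [subformulas, mem_subformulas_self])⟩

theorem mem_subformulas_of_dia {φ ψ : GML α} {k : ℕ} (h : dia k ψ ∈ φ.subformulas) :
    ψ ∈ φ.subformulas :=
  subformulas_subset h (by simp [subformulas, mem_subformulas_self])

/-- The number of true premises of the outermost connective of `χ` at `v`; an atom is its own
premise. -/
noncomputable def count (G : LabeledGraph α) : GML α → G.V → ℕ
  | atom p, v => if G.label v p then 1 else 0
  | neg ψ, v => if GML.sat G ψ v then 1 else 0
  | or ψ χ, v => (if GML.sat G ψ v then 1 else 0) + (if GML.sat G χ v then 1 else 0)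
  | dia _ ψ, v => ((G.nbhdFinset v).filter (GML.sat G ψ)).card

def gate : GML α → ℕ → Prop
  | atom _, k => 1 ≤ k
  | neg _, k => k = 0
  | or _ _, k => 1 ≤ k
  | dia n _, k => n ≤ k

theorem gate_count_iff (G : LabeledGraph α) (χ : GML α) (v : G.V) :
    χ.gate (count G χ v) ↔ GML.sat G χ v := by
  cases χ with
  | atom p => by_cases h : G.label v p <;> simp [gate, count, GML.sat, h]
  | neg ψ => by_cases h : GML.sat G ψ v <;> simp [gate, count, GML.sat, h]
  | or ψ χ =>
    by_cases h₁ : GML.sat G ψ v <;> by_cases h₂ : GML.sat G χ v <;>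
      simp [gate, count, GML.sat, h₁, h₂]
  | dia n ψ =>
    simp only [gate, count, GML.sat]
    rw [← Set.ncard_coe_finset]
    congr!
    ext u
    simp [LabeledGraph.nbhdFinset]

theorem count_le (G : LabeledGraph α) (χ : GML α) (v : G.V) :
    count G χ v ≤ Fintype.card G.V + 2 := by
  cases χ with
  | dia n ψ => exact (Finset.card_le_univ _).trans (Nat.le_add_right _ _)
  | _ => simp only [count]; split_ifs <;> omega

end GML

def simpleLayer (f : ℝ → ℝ) {ι : Type} {m k : ℕ} (e : ι ≃ Fin k) (C A : ι → Fin m → ℝ)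
    (b : ι → ℝ) (xv xa : Fin m → ℝ) (i : Fin k) : ℝ :=
  f (xv ⬝ᵥ C (e.symm i) + xa ⬝ᵥ A (e.symm i) + b (e.symm i))

section Network

variable {α : Type} (φ : GML α) (g : GML α → ℝ × ℝ →₀ ℝ)

/-- `some ⟨χ, (w, b)⟩` is the hidden neuron `(w, b)` of the gadget `g χ` of the subformula `χ`;
`none` is the output neuron. -/
abbrev Neuron : Type := Option (Σ χ : φ.subformulas, (g χ).support)

noncomputable abbrev neuronEquiv : Neuron φ g ≃ Fin (Fintype.card (Neuron φ g)) :=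
  Fintype.equivFin _

noncomputable def readout (χ : GML α) (j : Fin (Fintype.card (Neuron φ g))) : ℝ :=
  match (neuronEquiv φ g).symm j with
  | some ⟨ψ, p⟩ => if (ψ : GML α) = χ then g ψ p else 0
  | none => 0

/-- Labels are only visible in the first layer, so an atom keeps re-reading its own value. -/
noncomputable def selfCoeff : GML α → Fin (Fintype.card (Neuron φ g)) → ℝ
  | .atom p => readout φ g (.atom p)
  | .neg ψ => readout φ g ψ
  | .or ψ χ => readout φ g ψ + readout φ g χ
  | .dia _ _ => 0

noncomputable def nbrCoeff : GML α → Fin (Fintype.card (Neuron φ g)) → ℝ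
  | .dia _ ψ => readout φ g ψ
  | _ => 0

noncomputable def selfCol (w : ℝ) : Neuron φ g → Fin (Fintype.card (Neuron φ g)) → ℝ
  | some ⟨χ, p⟩ => p.1.1 • selfCoeff φ g χ
  | none => w • readout φ g φ

noncomputable def nbrCol : Neuron φ g → Fin (Fintype.card (Neuron φ g)) → ℝ
  | some ⟨χ, p⟩ => p.1.1 • nbrCoeff φ g χ
  | none => 0

def bias (b : ℝ) : Neuron φ g → ℝ
  | some ⟨_, p⟩ => p.1.2
  | none => b

theorem dotProduct_readout_eq_shallowNet {f : ℝ → ℝ} (x : Fin (Fintype.card (Neuron φ g)) → ℝ)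
    {χ : GML α} (hχ : χ ∈ φ.subformulas) {t : ℝ}
    (hx : ∀ p : (g χ).support, x (neuronEquiv φ g (some ⟨⟨χ, hχ⟩, p⟩)) = f (p.1.1 * t + p.1.2)) :
    x ⬝ᵥ readout φ g χ = shallowNet f (g χ) t := by
  rw [dotProduct, ← (neuronEquiv φ g).sum_comp, Fintype.sum_option, Fintype.sum_sigma,
    Fintype.sum_eq_single ⟨χ, hχ⟩]
  · simp [readout, hx, shallowNet, Finsupp.sum, mul_comm]
    exact Finset.sum_attach (g χ).support fun p => f (t * p.1 + p.2) * g χ p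
  · intro ψ hψ
    have : (ψ : GML α) ≠ χ := fun h => hψ (Subtype.ext h)
    simp [readout, this]

variable [Fintype α]

noncomputable def labelCoeff : GML α → Fin (Fintype.card α) → ℝ
  | .atom p => Pi.single (Fintype.equivFin α p) 1
  | _ => 0

noncomputable def labelCol : Neuron φ g → Fin (Fintype.card α) → ℝ
  | some ⟨χ, p⟩ => p.1.1 • labelCoeff χ
  | none => 0

noncomputable def gmlNet (f : ℝ → ℝ) (w b : ℝ) : GNN α where
  L := φ.height + 2
  δ
    | 0 => Fintype.card α
    | _ + 1 => Fintype.card (Neuron φ g)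
  hδ0 := rfl
  com
    | 0 => simpleLayer f (neuronEquiv φ g) (labelCol φ g) 0 (bias φ g b)
    | _ + 1 => simpleLayer f (neuronEquiv φ g) (selfCol φ g w) (nbrCol φ g) (bias φ g b)
  clsIdx := neuronEquiv φ g none
  clsStrict := false
  clsThr := (f b + f (w + b)) / 2

theorem gmlNet_isSimple (f : ℝ → ℝ) (w b : ℝ) : (gmlNet φ g f w b).IsSimple f := by
  rintro (_ | ℓ) -
  · exact ⟨fun j i => labelCol φ g ((neuronEquiv φ g).symm i) j, fun _ _ => 0,
      fun i => bias φ g b ((neuronEquiv φ g).symm i), fun _ _ _ => rfl⟩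
  · exact ⟨fun j i => selfCol φ g w ((neuronEquiv φ g).symm i) j,
      fun j i => nbrCol φ g ((neuronEquiv φ g).symm i) j,
      fun i => bias φ g b ((neuronEquiv φ g).symm i), fun _ _ _ => rfl⟩

noncomputable def hiddenFeat (f : ℝ → ℝ) (w b : ℝ) (G : LabeledGraph α) (ℓ : ℕ) (v : G.V) :
    Fin (Fintype.card (Neuron φ g)) → ℝ :=
  (gmlNet φ g f w b).feat .sum G (ℓ + 1) v

variable {φ g} {f : ℝ → ℝ} {w b : ℝ} {G : LabeledGraph α}

theorem hiddenFeat_zero (v : G.V) (h : Neuron φ g) :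
    hiddenFeat φ g f w b G 0 v (neuronEquiv φ g h) =
      f ((fun i => if G.label v ((Fintype.equivFin α).symm i) then 1 else 0) ⬝ᵥ labelCol φ g h
        + bias φ g b h) := by
  simp [hiddenFeat, GNN.feat, gmlNet, simpleLayer]

theorem hiddenFeat_succ (ℓ : ℕ) (v : G.V) (h : Neuron φ g) :
    hiddenFeat φ g f w b G (ℓ + 1) v (neuronEquiv φ g h) =
      f (hiddenFeat φ g f w b G ℓ v ⬝ᵥ selfCol φ g w h
        + (∑ u ∈ G.nbhdFinset v, hiddenFeat φ g f w b G ℓ u) ⬝ᵥ nbrCol φ g h + bias φ g b h) := by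
  rw [Finset.sum_fn]
  show simpleLayer f (neuronEquiv φ g) (selfCol φ g w) (nbrCol φ g) (bias φ g b) _ _ _ = _
  simp only [simpleLayer, Equiv.symm_apply_apply]
  rfl

theorem hiddenFeat_zero_readout (v : G.V) {χ : GML α} (hχ : χ ∈ φ.subformulas) :
    hiddenFeat φ g f w b G 0 v ⬝ᵥ readout φ g χ = shallowNet f (g χ)
      ((fun i => if G.label v ((Fintype.equivFin α).symm i) then 1 else 0) ⬝ᵥ labelCoeff χ) :=
  dotProduct_readout_eq_shallowNet φ g _ hχ fun p => by
    simp [hiddenFeat_zero, labelCol, bias, dotProduct_smul]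

theorem hiddenFeat_succ_readout (ℓ : ℕ) (v : G.V) {χ : GML α} (hχ : χ ∈ φ.subformulas) :
    hiddenFeat φ g f w b G (ℓ + 1) v ⬝ᵥ readout φ g χ = shallowNet f (g χ)
      (hiddenFeat φ g f w b G ℓ v ⬝ᵥ selfCoeff φ g χ
        + (∑ u ∈ G.nbhdFinset v, hiddenFeat φ g f w b G ℓ u) ⬝ᵥ nbrCoeff φ g χ) :=
  dotProduct_readout_eq_shallowNet φ g _ hχ fun p => by
    simp [hiddenFeat_succ, selfCol, nbrCol, bias, dotProduct_smul, mul_add]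

theorem hiddenFeat_readout_eq {n : ℕ}
    (hg : ∀ χ : GML α, ∀ k ≤ n + 2, shallowNet f (g χ) k = if χ.gate k then 1 else 0)
    (hG : Fintype.card G.V ≤ n) (ℓ : ℕ) {χ : GML α} (hχ : χ ∈ φ.subformulas)
    (hh : χ.height ≤ ℓ) (v : G.V) :
    hiddenFeat φ g f w b G ℓ v ⬝ᵥ readout φ g χ = if GML.sat G χ v then 1 else 0 := by
  have key : ∀ (χ : GML α) (v : G.V) (t : ℝ), t = χ.count G v →
      shallowNet f (g χ) t = if GML.sat G χ v then 1 else 0 := by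
    rintro χ v t rfl
    rw [hg χ _ ((χ.count_le G v).trans (by omega))]
    exact if_congr (χ.gate_count_iff G v) rfl rfl
  induction ℓ generalizing χ v with
  | zero =>
    cases χ with
    | atom p =>
      rw [hiddenFeat_zero_readout v hχ]
      apply key
      simp [labelCoeff, GML.count]
    | _ => simp [GML.height] at hh
  | succ ℓ ih =>
    rw [hiddenFeat_succ_readout ℓ v hχ]
    apply key
    cases χ with
    | atom p =>
      by_cases hp : G.label v p <;>
        simp [selfCoeff, nbrCoeff, ih hχ (Nat.zero_le _), GML.count, GML.sat, hp]
    | neg ψ =>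
      simp [selfCoeff, nbrCoeff, GML.count,
        ih (GML.mem_subformulas_of_neg hχ) (by simp [GML.height] at hh; omega)]
    | or ψ₁ ψ₂ =>
      simp [selfCoeff, nbrCoeff, GML.count, dotProduct_add,
        ih (GML.mem_subformulas_of_or hχ).1 (by simp [GML.height] at hh; omega),
        ih (GML.mem_subformulas_of_or hχ).2 (by simp [GML.height] at hh; omega)]
    | dia k ψ =>
      simp [selfCoeff, nbrCoeff, GML.count, sum_dotProduct, Finset.sum_boole,
        ih (GML.mem_subformulas_of_dia hχ) (by simp [GML.height] at hh; omega)]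

theorem gmlNet_accepts_iff {n : ℕ}
    (hg : ∀ χ : GML α, ∀ k ≤ n + 2, shallowNet f (g χ) k = if χ.gate k then 1 else 0)
    (hG : Fintype.card G.V ≤ n) (hwb : f b < f (w + b)) (v : G.V) :
    (gmlNet φ g f w b).accepts .sum G v ↔ GML.sat G φ v := by
  have hout : hiddenFeat φ g f w b G (φ.height + 1) v (neuronEquiv φ g none)
      = f (w * (if GML.sat G φ v then 1 else 0) + b) := by
    rw [hiddenFeat_succ]
    simp [selfCol, nbrCol, bias, dotProduct_smul,
      hiddenFeat_readout_eq hg hG _ (GML.mem_subformulas_self φ) le_rfl]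
  change (if false then _ else (f b + f (w + b)) / 2 ≤ hiddenFeat φ g f w b G (φ.height + 1) v
    (neuronEquiv φ g none)) ↔ _
  by_cases h : GML.sat G φ v <;> simp [hout, h] <;> linarith

end Network

theorem stmt6_general {α : Type} [Fintype α] (f : ℝ → ℝ) (hf : Continuous f)
    (hnp : ¬ ∃ p : Polynomial ℝ, ∀ x, f x = p.eval x)
    (φ : GML α) (n : ℕ) :
    ∃ 𝒢 : GNN α, 𝒢.IsSimple f ∧
      ∀ (G : LabeledGraph α) (v : G.V), Fintype.card G.V ≤ n →
        (𝒢.accepts Agg.sum G v ↔ GML.sat G φ v) := by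
  obtain ⟨a, c, hac⟩ := exists_lt_of_not_polynomial hnp
  choose g hg using fun χ : GML α => exists_shallowNet_eq hf hnp (fun k : Fin (n + 3) => (k : ℝ))
    (fun i j h => Fin.ext (by simpa using h)) (fun k => if χ.gate k then 1 else 0)
  refine ⟨gmlNet φ g f (c - a) a, gmlNet_isSimple φ g f _ _, fun G v hG => ?_⟩
  exact gmlNet_accepts_iff (fun χ k hk => hg χ ⟨k, by omega⟩) hG (by simpa using hac) v

/-- Let f be continuous and not a polynomial function. For every GML
formula φ and every n ≥ 1, there exists a simple Sum-GNN with activation f that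
accepts a pointed graph with at most n vertices iff the graph satisfies φ. -/
theorem stmt6 {α : Type} [Fintype α] (f : ℝ → ℝ) (hf : Continuous f)
    (hnp : ¬ ∃ p : Polynomial ℝ, ∀ x, f x = p.eval x)
    (φ : GML α) (n : ℕ) (hn : 1 ≤ n) :
    ∃ 𝒢 : GNN α, 𝒢.IsSimple f ∧
      ∀ (G : LabeledGraph α) (v : G.V), Fintype.card G.V ≤ n →
        (𝒢.accepts Agg.sum G v ↔ GML.sat G φ v) :=
  stmt6_general f hf hnp φ n
end

section
/- Let 𝒢 be a Mean-GNN with L layers over Π, let (G,v) be a pointed Π-labeled graph, let c ≥ 1 and i ∈ {1,…,c}. Then the feature vector computed by 𝒢 at v in G in the final layer equals the feature vector computed at (v,i) in the c-scaling c·G: x^L_{G,v} = x^L_{c·G,(v,i)}. -/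
open scoped Classical

/- Each successor `u` of `v` in `G` becomes the `c` successors `(u, 1), …, (u, c)` of `(v, i)` in
`c·G`, all carrying the features of `u` by induction on the layer. Replicating every element of a
multiset `c` times multiplies its sum and its size by `c`, so the mean is unchanged. -/

theorem Agg.apply_mean_product_univ {V ι : Type} [Fintype ι] [Nonempty ι] (s : Finset V)
    (x : V → ℝ) :
    Agg.mean.apply (s ×ˢ (Finset.univ : Finset ι)) (fun p => x p.1) = Agg.mean.apply s x := by
  have hι : (Fintype.card ι : ℝ) ≠ 0 := Nat.cast_ne_zero.mpr Fintype.card_ne_zero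
  simp only [Agg.apply, Finset.sum_product, Finset.sum_const, Finset.card_univ, nsmul_eq_mul,
    ← Finset.mul_sum, Finset.card_product, Nat.cast_mul]
  rw [mul_comm (s.card : ℝ), mul_div_mul_left _ _ hι]

theorem LabeledGraph.nbhdFinset_scale {α : Type} (G : LabeledGraph α) (c : ℕ) (v : G.V)
    (i : Fin c) :
    (G.scale c).nbhdFinset (v, i) = G.nbhdFinset v ×ˢ (Finset.univ : Finset (Fin c)) :=
  Finset.filter_product_left (s := Finset.univ) (t := Finset.univ) (fun u => G.adj v u)

theorem GNN.feat_mean_scale {α : Type} [Fintype α] (𝒢 : GNN α) (G : LabeledGraph α) (c : ℕ)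
    (ℓ : ℕ) (v : G.V) (i : Fin c) :
    𝒢.feat Agg.mean (G.scale c) ℓ (v, i) = 𝒢.feat Agg.mean G ℓ v := by
  have : Nonempty (Fin c) := ⟨i⟩
  induction ℓ generalizing v i with
  | zero => rfl
  | succ ℓ ih =>
    have hmean : ∀ j, Agg.mean.apply ((G.scale c).nbhdFinset (v, i))
          (fun p => 𝒢.feat Agg.mean (G.scale c) ℓ p j) =
        Agg.mean.apply (G.nbhdFinset v) (fun u => 𝒢.feat Agg.mean G ℓ u j) := fun j => by
      have hlift : (fun p : (G.scale c).V => 𝒢.feat Agg.mean (G.scale c) ℓ p j) =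
          fun p => 𝒢.feat Agg.mean G ℓ p.1 j := funext fun p => congrFun (ih p.1 p.2) j
      rw [LabeledGraph.nbhdFinset_scale, hlift]
      exact Agg.apply_mean_product_univ (G.nbhdFinset v) fun u => 𝒢.feat Agg.mean G ℓ u j
    simp only [GNN.feat, ih, hmean]

theorem stmt11_general {α : Type} [Fintype α] (𝒢 : GNN α) (G : LabeledGraph α) (v : G.V)
    (c : ℕ) (i : Fin c) :
    𝒢.feat Agg.mean G 𝒢.L v = 𝒢.feat Agg.mean (G.scale c) 𝒢.L (v, i) :=
  (𝒢.feat_mean_scale G c 𝒢.L v i).symm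

/-- Mean-GNN feature vectors are invariant under c-scaling:
the final-layer feature vector at v in G equals that at (v,i) in c·G. -/
theorem stmt11 {α : Type} [Fintype α] (𝒢 : GNN α) (G : LabeledGraph α) (v : G.V)
    (c : ℕ) (hc : 1 ≤ c) (i : Fin c) :
    𝒢.feat Agg.mean G 𝒢.L v = 𝒢.feat Agg.mean (G.scale c) 𝒢.L (v, i) :=
  stmt11_general 𝒢 G v c i
end

section
/- Let (G1,v1) and (G2,v2) be pointed Π-labeled graphs and ℓ ≥ 0. If Spoiler does not win the ℓ-round ML game on ((G1,v1),(G2,v2)), then for all c ≥ 1 and all k1, k2 ∈ {1,…,c}, Spoiler does not win the ℓ-round GML[c] game on ((c·G1,(v1,k1)),(c·G2,(v2,k2))). -/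
open scoped Classical

private lemma ncard_scale_nbhd_ge {α : Type} (G : LabeledGraph α) (c : ℕ) {v w : G.V}
    (hw : G.adj v w) (k : Fin c) : c ≤ ((G.scale c).nbhd (v, k)).ncard := by
  have hsub : (fun j : Fin c => ((w, j) : (G.scale c).V)) '' Set.univ ⊆ (G.scale c).nbhd (v, k) := by
    rintro ⟨a, b⟩ ⟨j, -, hj⟩
    cases hj
    exact hw
  have hinj : Function.Injective (fun j : Fin c => ((w, j) : (G.scale c).V)) := by
    intro a b hab
    exact congrArg Prod.snd hab
  calc c = (Set.univ : Set (Fin c)).ncard := by simp [Set.ncard_univ]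
    _ = ((fun j : Fin c => ((w, j) : (G.scale c).V)) '' Set.univ).ncard :=
        (Set.ncard_image_of_injective _ hinj).symm
    _ ≤ _ := Set.ncard_le_ncard hsub (Set.toFinite _)

/-- If Spoiler does not win the ℓ-round ML game on ((G1,v1),(G2,v2)),
then for all c ≥ 1 and all k1,k2 ∈ {1,…,c}, Spoiler does not win the ℓ-round GML[c]
game on the c-scalings ((c·G1,(v1,k1)),(c·G2,(v2,k2))). -/
theorem stmt13 {α : Type} (G1 G2 : LabeledGraph α) (v1 : G1.V) (v2 : G2.V) (ℓ : ℕ)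
    (h : ¬ spoilerWinsML G1 G2 ℓ v1 v2) (c : ℕ) (hc : 1 ≤ c) (k1 k2 : Fin c) :
    ¬ spoilerWinsGML c (G1.scale c) (G2.scale c) ℓ (v1, k1) (v2, k2) := by
  induction ℓ generalizing v1 v2 k1 k2 with
  | zero => exact h
  | succ ℓ ih =>
    simp only [spoilerWinsML, not_or] at h
    obtain ⟨hlab, h1, h2⟩ := h
    rw [not_not] at hlab
    push_neg at h1 h2
    intro hsp
    rcases hsp with hne | ⟨U1, hU1adj, hU1pos, hU1le, hcase⟩ | ⟨U2, hU2adj, hU2pos, hU2le, hcase⟩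
    · exact hne fun p => hlab p
    · obtain ⟨u0, hu0⟩ := Finset.card_pos.mp hU1pos
      obtain ⟨w2, hw2, -⟩ := h1 u0.1 (hU1adj u0 hu0)
      choose F hF hF2 using fun (u : {x // x ∈ U1}) => h1 u.1.1 (hU1adj u.1 u.2)
      rcases hcase with hlt | hall
      · exact absurd hlt (not_lt.mpr (hU1le.trans (ncard_scale_nbhd_ge G2 c hw2 k2)))
      · obtain ⟨ι⟩ := Function.Embedding.nonempty_of_card_le
          (show Fintype.card {x // x ∈ U1} ≤ Fintype.card (Fin c) by
            simpa [Fintype.card_coe] using hU1le)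
        set g : {x // x ∈ U1} → (G2.scale c).V := fun u => (F u, ι u) with hg
        have hginj : Function.Injective g := fun a b hab => ι.injective (congrArg Prod.snd hab)
        obtain ⟨u2, hu2mem, hu2⟩ := hall (Finset.univ.image g)
          (by
            intro u hu
            simp only [Finset.mem_image, Finset.mem_univ, true_and] at hu
            obtain ⟨a, rfl⟩ := hu
            exact hF a)
          (by rw [Finset.card_image_of_injective _ hginj, Finset.card_univ, Fintype.card_coe])
        simp only [Finset.mem_image, Finset.mem_univ, true_and] at hu2mem
        obtain ⟨a, rfl⟩ := hu2mem
        exact ih a.1.1 (F a) (hF2 a) a.1.2 (ι a) (hu2 a.1 a.2)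
    · obtain ⟨u0, hu0⟩ := Finset.card_pos.mp hU2pos
      obtain ⟨w1, hw1, -⟩ := h2 u0.1 (hU2adj u0 hu0)
      choose F hF hF2 using fun (u : {x // x ∈ U2}) => h2 u.1.1 (hU2adj u.1 u.2)
      rcases hcase with hlt | hall
      · exact absurd hlt (not_lt.mpr (hU2le.trans (ncard_scale_nbhd_ge G1 c hw1 k1)))
      · obtain ⟨ι⟩ := Function.Embedding.nonempty_of_card_le
          (show Fintype.card {x // x ∈ U2} ≤ Fintype.card (Fin c) by
            simpa [Fintype.card_coe] using hU2le)
        set g : {x // x ∈ U2} → (G1.scale c).V := fun u => (F u, ι u) with hg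
        have hginj : Function.Injective g := fun a b hab => ι.injective (congrArg Prod.snd hab)
        obtain ⟨u1, hu1mem, hu1⟩ := hall (Finset.univ.image g)
          (by
            intro u hu
            simp only [Finset.mem_image, Finset.mem_univ, true_and] at hu
            obtain ⟨a, rfl⟩ := hu
            exact hF a)
          (by rw [Finset.card_image_of_injective _ hginj, Finset.card_univ, Fintype.card_coe])
        simp only [Finset.mem_image, Finset.mem_univ, true_and] at hu1mem
        obtain ⟨a, rfl⟩ := hu1mem
        exact ih (F a) a.1.1 (hF2 a) (ι a) a.1.2 (hu1 a.1 a.2)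
end

section
/- Let Π = {P, Q}. There is no AFML formula ψ such that for all pointed Π-labeled graphs (G,v): G,v ⊨ ψ iff G,v ⊨ ◊P ∧ □Q (where □φ abbreviates ¬◊¬φ). Hence AFML is strictly less expressive than ML in the uniform setting. -/
open scoped Classical

/-- The ML formula ◊P ∧ □Q over Π = {P,Q} (with P = 0, Q = 1, □φ = ¬◊¬φ and
φ∧ψ = ¬(¬φ∨¬ψ)). -/
def phi14 : ML (Fin 2) :=
  ML.neg (ML.or (ML.neg (ML.dia (ML.atom 0))) (ML.dia (ML.neg (ML.atom 1))))

/-- Labels: vertex 1 has {P,Q}, vertex 2 has {P}, vertex 3 has {Q}, vertex 0 has none. -/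
abbrev lab4 : Fin 4 → Fin 2 → Prop :=
  fun v p => v = 1 ∨ (v = 2 ∧ p = 0) ∨ (v = 3 ∧ p = 1)

abbrev GA : LabeledGraph (Fin 2) := { V := Fin 4, adj := fun v u => v = 0 ∧ u = 1, label := lab4 }
abbrev GB : LabeledGraph (Fin 2) :=
  { V := Fin 4, adj := fun v u => v = 0 ∧ (u = 1 ∨ u = 2), label := lab4 }
abbrev GC : LabeledGraph (Fin 2) :=
  { V := Fin 4, adj := fun v u => v = 0 ∧ (u = 1 ∨ u = 3), label := lab4 }
abbrev GD : LabeledGraph (Fin 2) := { V := Fin 4, adj := fun v u => v = 0 ∧ u = 3, label := lab4 }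

/-- AFML1 truth is preserved when adding edges, provided no vertex goes from
having no successors to having a successor. -/
lemma afml1_mono {α V : Type} [Fintype V] (adj1 adj2 : V → V → Prop) (lab : V → α → Prop)
    (hsub : ∀ v u, adj1 v u → adj2 v u)
    (hemp : ∀ v u, adj2 v u → ∃ w, adj1 v w) :
    ∀ (φ : AFML1 α) (v : V),
      AFML1.sat { V := V, adj := adj1, label := lab } φ v →
      AFML1.sat { V := V, adj := adj2, label := lab } φ v := by
  intro φ
  induction φ with
  | atom p => intro v h; exact h
  | natom p => intro v h; exact h
  | boxBot =>
      intro v h u hadj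
      obtain ⟨w, hw⟩ := hemp v u hadj
      exact h w hw
  | and φ ψ ih1 ih2 => intro v h; exact ⟨ih1 v h.1, ih2 v h.2⟩
  | or φ ψ ih1 ih2 =>
      intro v h
      rcases h with h | h
      · exact Or.inl (ih1 v h)
      · exact Or.inr (ih2 v h)
  | dia φ ih =>
      rintro v ⟨u, hadj, h⟩
      exact ⟨u, hsub v u hadj, ih u h⟩

/-- AFML2 truth is preserved when removing edges, provided no vertex goes from
having a successor to having none. -/
lemma afml2_anti {α V : Type} [Fintype V] (adj1 adj2 : V → V → Prop) (lab : V → α → Prop)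
    (hsub : ∀ v u, adj2 v u → adj1 v u)
    (hne : ∀ v u, adj1 v u → ∃ w, adj2 v w) :
    ∀ (φ : AFML2 α) (v : V),
      AFML2.sat { V := V, adj := adj1, label := lab } φ v →
      AFML2.sat { V := V, adj := adj2, label := lab } φ v := by
  intro φ
  induction φ with
  | atom p => intro v h; exact h
  | natom p => intro v h; exact h
  | diaTop =>
      rintro v ⟨u, hadj⟩
      exact hne v u hadj
  | and φ ψ ih1 ih2 => intro v h; exact ⟨ih1 v h.1, ih2 v h.2⟩
  | or φ ψ ih1 ih2 =>
      intro v h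
      rcases h with h | h
      · exact Or.inl (ih1 v h)
      · exact Or.inr (ih2 v h)
  | box φ ih =>
      intro v h u hadj
      exact ih u (h u (hsub v u hadj))

lemma phi14_GA : ML.sat GA phi14 0 := by
  simp [phi14, ML.sat, lab4]

lemma phi14_GB : ¬ ML.sat GB phi14 0 := by
  simp [phi14, ML.sat, lab4]

lemma phi14_GC : ML.sat GC phi14 0 := by
  simp [phi14, ML.sat, lab4]

lemma phi14_GD : ¬ ML.sat GD phi14 0 := by
  simp [phi14, ML.sat, lab4]

/-- No AFML formula is equivalent to the ML formula ◊P ∧ □Q. -/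
theorem stmt14 :
    ¬ ∃ ψ : AFML (Fin 2), ∀ (G : LabeledGraph (Fin 2)) (v : G.V),
      AFML.sat G ψ v ↔ ML.sat G phi14 v := by
  rintro ⟨ψ, hψ⟩
  cases ψ with
  | inl φ =>
      have h1 : AFML1.sat GA φ 0 := (hψ GA 0).2 phi14_GA
      have h2 : AFML1.sat GB φ 0 := by
        refine afml1_mono _ _ lab4 ?_ ?_ φ 0 h1
        · rintro v u ⟨rfl, rfl⟩; exact ⟨rfl, Or.inl rfl⟩
        · rintro v u ⟨rfl, -⟩; exact ⟨1, rfl, rfl⟩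
      exact phi14_GB ((hψ GB 0).1 h2)
  | inr φ =>
      have h1 : AFML2.sat GC φ 0 := (hψ GC 0).2 phi14_GC
      have h2 : AFML2.sat GD φ 0 := by
        refine afml2_anti _ _ lab4 ?_ ?_ φ 0 h1
        · rintro v u ⟨rfl, rfl⟩; exact ⟨rfl, Or.inr rfl⟩
        · rintro v u ⟨rfl, -⟩; exact ⟨3, rfl, rfl⟩
      exact phi14_GD ((hψ GD 0).1 h2)
end
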